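/- arXiv:1901.09350 — 8 statements merged into one kernel-verified Lean document; each statement's English description precedes it below -/
import Mathlib

section
/- Let h : [0,∞) → ℝ be defined by h(x) = x^(−2) + x^(−3) for x ≥ 1 and h(x) = 7x − 5 for 0 ≤ x < 1, and define ℱ[h](x) := ∫_0^{π/2} h(x sin θ) dθ. Then lim_{x→∞} (x^3 / log x) · ℱ[h](x) = 1/2. -/
/-!
Put `a = arcsin x⁻¹`, the angle at which `x sin θ` crosses `1`. On `[0, a]` the integrand is
`7 x sin θ - 5` and on `[a, π/2]` it is `x⁻² / sin² θ + x⁻³ / sin³ θ`; both have elementary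
antiderivatives, which gives `ℱ[h](x)` in closed form. After multiplying by `x³`, the logarithm in
the antiderivative of `1 / sin³` contributes `log (x (1 + cos a)) / 2 ~ (log x) / 2`. The other
terms are of order `x²` but cancel there; the bounds `sin a < a < tan a` trap what is left between
two functions of `cos a → 1`, so it is bounded.
-/

open MeasureTheory Real Filter Set
open scoped Interval Topology

section InverseSinePowers

variable {a b : ℝ}

lemma sin_pos_of_mem_uIcc (ha : 0 < a) (hab : a ≤ b) (hb : b < π) {θ : ℝ} (hθ : θ ∈ [[a, b]]) :
    0 < sin θ := by
  rw [uIcc_of_le hab] at hθ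
  exact sin_pos_of_pos_of_lt_pi (ha.trans_le hθ.1) (hθ.2.trans_lt hb)

lemma intervalIntegrable_one_div_sin_pow (n : ℕ) (ha : 0 < a) (hab : a ≤ b) (hb : b < π) :
    IntervalIntegrable (fun θ => 1 / sin θ ^ n) volume a b :=
  (continuousOn_const.div (continuous_sin.continuousOn.pow n) fun _ hθ =>
    (pow_pos (sin_pos_of_mem_uIcc ha hab hb hθ) n).ne').intervalIntegrable

lemma integral_one_div_sin_sq (ha : 0 < a) (hab : a ≤ b) (hb : b < π) :
    ∫ θ in a..b, 1 / sin θ ^ 2 = cos a / sin a - cos b / sin b := by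
  have hderiv : ∀ θ ∈ [[a, b]], HasDerivAt (fun t => -(cos t / sin t)) (1 / sin θ ^ 2) θ := by
    intro θ hθ
    have hsin := (sin_pos_of_mem_uIcc ha hab hb hθ).ne'
    have h : HasDerivAt (fun t => -(cos t / sin t)) _ θ :=
      ((hasDerivAt_cos θ).fun_div (hasDerivAt_sin θ) hsin).fun_neg
    convert h using 1
    field_simp
    linear_combination -sin_sq_add_cos_sq θ
  rw [intervalIntegral.integral_eq_sub_of_hasDerivAt hderiv
    (intervalIntegrable_one_div_sin_pow 2 ha hab hb)]
  ring

noncomputable def antiderivOneDivSinCube (t : ℝ) : ℝ :=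
  (log (sin t / (1 + cos t)) - cos t / sin t ^ 2) / 2

lemma integral_one_div_sin_cube (ha : 0 < a) (hab : a ≤ b) (hb : b < π) :
    ∫ θ in a..b, 1 / sin θ ^ 3 = antiderivOneDivSinCube b - antiderivOneDivSinCube a := by
  refine intervalIntegral.integral_eq_sub_of_hasDerivAt (fun θ hθ => ?_)
    (intervalIntegrable_one_div_sin_pow 3 ha hab hb)
  have hsin := sin_pos_of_mem_uIcc ha hab hb hθ
  have hcos : 0 < 1 + cos θ := by nlinarith [sin_sq_add_cos_sq θ, neg_one_le_cos θ]
  have hlog : HasDerivAt (fun t => log (sin t / (1 + cos t))) _ θ :=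
    ((hasDerivAt_sin θ).fun_div ((hasDerivAt_const θ 1).fun_add (hasDerivAt_cos θ))
      hcos.ne').log (div_pos hsin hcos).ne'
  have hquot : HasDerivAt (fun t => cos t / sin t ^ 2) _ θ :=
    (hasDerivAt_cos θ).fun_div ((hasDerivAt_sin θ).fun_pow 2) (pow_pos hsin 2).ne'
  have h : HasDerivAt antiderivOneDivSinCube _ θ := (hlog.fun_sub hquot).div_const 2
  refine h.congr_deriv ?_
  field_simp
  linear_combination (sin θ ^ 3 + 2 * sin θ * (1 + cos θ)) * sin_sq_add_cos_sq θ

end InverseSinePowers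

lemma tendsto_div_atTop_of_le_of_le {α : Type*} {l : Filter α} {f g lo hi : α → ℝ} {a b : ℝ}
    (hlo : Tendsto lo l (𝓝 a)) (hhi : Tendsto hi l (𝓝 b)) (hlo_le : ∀ᶠ x in l, lo x ≤ f x)
    (hle_hi : ∀ᶠ x in l, f x ≤ hi x) (hg : Tendsto g l atTop) :
    Tendsto (fun x => f x / g x) l (𝓝 0) := by
  refine tendsto_of_tendsto_of_tendsto_of_le_of_le' (hlo.div_atTop hg) (hhi.div_atTop hg) ?_ ?_
  · filter_upwards [hlo_le, hg.eventually_gt_atTop 0] with x hx hgx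
    exact div_le_div_of_nonneg_right hx hgx.le
  · filter_upwards [hle_hi, hg.eventually_gt_atTop 0] with x hx hgx
    exact div_le_div_of_nonneg_right hx hgx.le

lemma tendsto_log_mul_div_log {g : ℝ → ℝ} {L : ℝ} (hL : 0 < L) (hg : Tendsto g atTop (𝓝 L)) :
    Tendsto (fun x => log (x * g x) / log x) atTop (𝓝 1) := by
  have h := ((continuousAt_log hL.ne').tendsto.comp hg).div_atTop tendsto_log_atTop
  rw [← add_zero 1]
  refine (tendsto_const_nhds.add h).congr' ?_
  filter_upwards [eventually_gt_atTop 1, hg.eventually (lt_mem_nhds hL)] with x hx hgx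
  have hlogx := (log_pos hx).ne'
  rw [Function.comp_apply, log_mul (by linarith) hgx.ne']
  field_simp

noncomputable def cosArcsinInv (x : ℝ) : ℝ :=
  cos (arcsin x⁻¹)

section CosArcsinInv

variable {x : ℝ}

lemma sin_arcsin_inv (hx : 1 < x) : sin (arcsin x⁻¹) = x⁻¹ :=
  sin_arcsin (by linarith [inv_pos.2 (zero_lt_one.trans hx)]) (inv_lt_one_of_one_lt₀ hx).le

lemma cosArcsinInv_pos (hx : 1 < x) : 0 < cosArcsinInv x :=
  cos_pos_of_mem_Ioo ⟨by linarith [pi_pos, arcsin_pos.2 (inv_pos.2 (zero_lt_one.trans hx))],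
    arcsin_lt_pi_div_two.2 (inv_lt_one_of_one_lt₀ hx)⟩

lemma sq_mul_cosArcsinInv_sq (hx : 1 < x) : x ^ 2 * cosArcsinInv x ^ 2 = x ^ 2 - 1 := by
  rw [cosArcsinInv, cos_sq', sin_arcsin_inv hx]
  field_simp

lemma inv_lt_arcsin_inv (hx : 1 < x) : x⁻¹ < arcsin x⁻¹ := by
  simpa [sin_arcsin_inv hx] using sin_lt (arcsin_pos.2 (inv_pos.2 (zero_lt_one.trans hx)))

lemma arcsin_inv_lt (hx : 1 < x) : arcsin x⁻¹ < x⁻¹ / cosArcsinInv x := by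
  simpa [cosArcsinInv, tan_eq_sin_div_cos, sin_arcsin_inv hx] using
    lt_tan (arcsin_pos.2 (inv_pos.2 (zero_lt_one.trans hx)))
      (arcsin_lt_pi_div_two.2 (inv_lt_one_of_one_lt₀ hx))

lemma tendsto_cosArcsinInv : Tendsto cosArcsinInv atTop (𝓝 1) := by
  have h := ((continuous_cos.comp continuous_arcsin).tendsto 0).comp tendsto_inv_atTop_zero
  rwa [Function.comp_apply, arcsin_zero, cos_zero] at h

end CosArcsinInv

/-- The function `h` of the statement. -/
noncomputable def profile (t : ℝ) : ℝ :=
  if 1 ≤ t then t ^ (-2 : ℝ) + t ^ (-3 : ℝ) else 7 * t - 5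

lemma profile_of_one_le {t : ℝ} (ht : 1 ≤ t) : profile t = t⁻¹ ^ 2 + t⁻¹ ^ 3 := by
  rw [profile, if_pos ht, rpow_neg (zero_le_one.trans ht), rpow_neg (zero_le_one.trans ht)]
  norm_cast
  simp [inv_pow]

lemma profile_of_le_one {t : ℝ} (ht : t ≤ 1) : profile t = 7 * t - 5 := by
  rcases ht.lt_or_eq with ht | rfl
  · rw [profile, if_neg ht.not_ge]
  · norm_num [profile_of_one_le]

section Profile

variable {x : ℝ}

lemma profile_mul_sin_of_mem_Icc_zero (hx : 1 < x) {θ : ℝ} (hθ : θ ∈ Icc 0 (arcsin x⁻¹)) :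
    profile (x * sin θ) = 7 * x * sin θ - 5 := by
  have hsin : sin θ ≤ sin (arcsin x⁻¹) :=
    sin_le_sin_of_le_of_le_pi_div_two (by linarith [pi_pos, hθ.1]) (arcsin_le_pi_div_two _) hθ.2
  rw [sin_arcsin_inv hx] at hsin
  have hx0 : 0 < x := zero_lt_one.trans hx
  rw [profile_of_le_one (by simpa [hx0.ne'] using mul_le_mul_of_nonneg_left hsin hx0.le),
    mul_assoc]

lemma profile_mul_sin_of_mem_Icc_pi_div_two (hx : 1 < x) {θ : ℝ}
    (hθ : θ ∈ Icc (arcsin x⁻¹) (π / 2)) :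
    profile (x * sin θ) = x⁻¹ ^ 2 * (1 / sin θ ^ 2) + x⁻¹ ^ 3 * (1 / sin θ ^ 3) := by
  have hsin : sin (arcsin x⁻¹) ≤ sin θ :=
    sin_le_sin_of_le_of_le_pi_div_two (neg_pi_div_two_le_arcsin _) hθ.2 hθ.1
  rw [sin_arcsin_inv hx] at hsin
  have hx0 : 0 < x := zero_lt_one.trans hx
  rw [profile_of_one_le (by simpa [hx0.ne'] using mul_le_mul_of_nonneg_left hsin hx0.le)]
  ring

lemma integral_profile_mul_sin (hx : 1 < x) :
    ∫ θ in (0)..(π / 2), profile (x * sin θ) =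
      7 * x * (1 - cosArcsinInv x) - 5 * arcsin x⁻¹ + 3 * cosArcsinInv x / (2 * x)
        + log (x * (1 + cosArcsinInv x)) / (2 * x ^ 3) := by
  have hx0 : 0 < x := zero_lt_one.trans hx
  have hsina := sin_arcsin_inv hx
  rw [cosArcsinInv]
  set a := arcsin x⁻¹
  have ha0 : 0 < a := arcsin_pos.2 (inv_pos.2 hx0)
  have ha : a < π / 2 := arcsin_lt_pi_div_two.2 (inv_lt_one_of_one_lt₀ hx)
  have hlin : EqOn (fun θ => profile (x * sin θ)) (fun θ => 7 * x * sin θ - 5) [[0, a]] :=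
    fun θ hθ => profile_mul_sin_of_mem_Icc_zero hx (by rwa [uIcc_of_le ha0.le] at hθ)
  have hcsc : EqOn (fun θ => profile (x * sin θ))
      (fun θ => x⁻¹ ^ 2 * (1 / sin θ ^ 2) + x⁻¹ ^ 3 * (1 / sin θ ^ 3)) [[a, π / 2]] :=
    fun θ hθ => profile_mul_sin_of_mem_Icc_pi_div_two hx (by rwa [uIcc_of_le ha.le] at hθ)
  have hb : π / 2 < π := by linarith [pi_pos]
  have hi1 : IntervalIntegrable (fun θ => profile (x * sin θ)) volume 0 a :=
    ((continuous_const.mul continuous_sin).sub continuous_const).continuousOn.congr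
      hlin |>.intervalIntegrable
  have h2 := (intervalIntegrable_one_div_sin_pow 2 ha0 ha.le hb).const_mul (x⁻¹ ^ 2)
  have h3 := (intervalIntegrable_one_div_sin_pow 3 ha0 ha.le hb).const_mul (x⁻¹ ^ 3)
  have hi2 : IntervalIntegrable (fun θ => profile (x * sin θ)) volume a (π / 2) :=
    (intervalIntegrable_congr (hcsc.mono uIoc_subset_uIcc)).2 (h2.add h3)
  rw [← intervalIntegral.integral_add_adjacent_intervals hi1 hi2,
    intervalIntegral.integral_congr hlin, intervalIntegral.integral_congr hcsc,
    intervalIntegral.integral_add h2 h3,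
    intervalIntegral.integral_const_mul, intervalIntegral.integral_const_mul,
    integral_one_div_sin_sq ha0 ha.le hb, integral_one_div_sin_cube ha0 ha.le hb]
  simp only [antiderivOneDivSinCube, cos_pi_div_two, sin_pi_div_two, add_zero, div_one, log_one,
    hsina]
  have hlog : log (x⁻¹ / (1 + cos a)) = -log (x * (1 + cos a)) := by
    rw [div_eq_mul_inv, ← mul_inv, log_inv]
  have hsin_int : ∫ θ in (0)..a, 7 * x * sin θ - 5 = 7 * x * (1 - cos a) - 5 * a := by
    rw [intervalIntegral.integral_sub (intervalIntegral.intervalIntegrable_sin.const_mul _)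
      intervalIntegrable_const, intervalIntegral.integral_const_mul, integral_sin,
      intervalIntegral.integral_const, cos_zero, smul_eq_mul]
    ring
  rw [hlog, hsin_int]
  field_simp
  ring

noncomputable def profileRemainder (x : ℝ) : ℝ :=
  7 * x ^ 4 * (1 - cosArcsinInv x) + 3 / 2 * x ^ 2 * cosArcsinInv x - 5 * x ^ 3 * arcsin x⁻¹

lemma cube_mul_integral_profile_mul_sin (hx : 1 < x) :
    x ^ 3 * ∫ θ in (0)..(π / 2), profile (x * sin θ) =
      profileRemainder x + log (x * (1 + cosArcsinInv x)) / 2 := by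
  have hx0 : x ≠ 0 := (zero_lt_one.trans hx).ne'
  rw [integral_profile_mul_sin hx, profileRemainder]
  field_simp
  ring

lemma profileRemainder_eq (hx : 1 < x) :
    profileRemainder x = (2 - 3 / 2 * cosArcsinInv x) / (1 + cosArcsinInv x) ^ 2
      - 5 * (x ^ 2 * (x * arcsin x⁻¹ - 1)) := by
  have hc := cosArcsinInv_pos hx
  rw [profileRemainder, eq_sub_iff_add_eq, eq_div_iff (by positivity)]
  linear_combination (-7 * x ^ 2 - 7 * x ^ 2 * cosArcsinInv x - 2 + 3 / 2 * cosArcsinInv x) *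
    sq_mul_cosArcsinInv_sq hx

lemma arcsin_inv_excess_pos (hx : 1 < x) : 0 < x ^ 2 * (x * arcsin x⁻¹ - 1) := by
  have hx0 : 0 < x := zero_lt_one.trans hx
  have h := mul_lt_mul_of_pos_left (inv_lt_arcsin_inv hx) hx0
  rw [mul_inv_cancel₀ hx0.ne'] at h
  exact mul_pos (by positivity) (by linarith)

lemma arcsin_inv_excess_lt (hx : 1 < x) :
    x ^ 2 * (x * arcsin x⁻¹ - 1) < 1 / ((1 + cosArcsinInv x) * cosArcsinInv x) := by
  have hx0 : 0 < x := zero_lt_one.trans hx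
  have hc := cosArcsinInv_pos hx
  have h := mul_lt_mul_of_pos_left (arcsin_inv_lt hx) hx0
  rw [mul_div_assoc', mul_inv_cancel₀ hx0.ne'] at h
  rw [lt_div_iff₀ (by positivity)]
  calc x ^ 2 * (x * arcsin x⁻¹ - 1) * ((1 + cosArcsinInv x) * cosArcsinInv x)
      < x ^ 2 * (1 / cosArcsinInv x - 1) * ((1 + cosArcsinInv x) * cosArcsinInv x) := by
        gcongr
    _ = 1 := by
        field_simp
        linear_combination -sq_mul_cosArcsinInv_sq hx

end Profile

lemma tendsto_profileRemainder_div_log :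
    Tendsto (fun x => profileRemainder x / log x) atTop (𝓝 0) := by
  have hc := tendsto_cosArcsinInv
  have hmain : Tendsto (fun x => (2 - 3 / 2 * cosArcsinInv x) / (1 + cosArcsinInv x) ^ 2)
      atTop (𝓝 ((2 - 3 / 2 * 1) / (1 + 1) ^ 2)) :=
    (tendsto_const_nhds.sub (hc.const_mul _)).div ((tendsto_const_nhds.add hc).pow 2)
      (by norm_num)
  have hexcess : Tendsto (fun x => 1 / ((1 + cosArcsinInv x) * cosArcsinInv x))
      atTop (𝓝 (1 / ((1 + 1) * 1))) :=
    tendsto_const_nhds.div ((tendsto_const_nhds.add hc).mul hc) (by norm_num)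
  refine tendsto_div_atTop_of_le_of_le (hmain.sub (hexcess.const_mul 5)) hmain ?_ ?_
    tendsto_log_atTop
  · filter_upwards [eventually_gt_atTop 1] with x hx
    rw [profileRemainder_eq hx]
    linarith [arcsin_inv_excess_lt hx]
  · filter_upwards [eventually_gt_atTop 1] with x hx
    rw [profileRemainder_eq hx]
    linarith [arcsin_inv_excess_pos hx]

/-- For the example function `h`, `lim_{x→∞} (x^3/log x)·ℱ[h](x) = 1/2`. -/
theorem stmt_4 :
    Tendsto (fun x : ℝ => (x ^ 3 / Real.log x) *
        ∫ θ in (0:ℝ)..(Real.pi/2),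
          (fun t : ℝ => if 1 ≤ t then t ^ (-2 : ℝ) + t ^ (-3 : ℝ) else 7 * t - 5)
            (x * Real.sin θ))
      atTop (nhds (1/2)) := by
  have hlog := (tendsto_log_mul_div_log (by norm_num : (0 : ℝ) < 1 + 1)
    (tendsto_const_nhds.add tendsto_cosArcsinInv)).div_const 2
  have hsum := tendsto_profileRemainder_div_log.add hlog
  rw [zero_add] at hsum
  refine hsum.congr' ?_
  filter_upwards [eventually_gt_atTop 1] with x hx
  change _ = x ^ 3 / log x * ∫ θ in (0)..(π / 2), profile (x * sin θ)
  rw [div_mul_eq_mul_div, cube_mul_integral_profile_mul_sin hx]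
  ring
end

section
/- Let f be continuous on [0,∞) and define ℱ[f](x) = ∫_0^{π/2} f(x sin θ) dθ and [f]_1(x) = x^2 f(x) + x ∫_0^x f(s) ds. Then for all x > 0, ℱ[f](x) = x^(−2) · ℱ[[f]_1](x). -/
/-!
Write `G(θ) = ∫₀^{x sin θ} g`. Since `sin² + cos² = 1`, the integrand of `ℱ[[g]₁](x)` is
`x² g(x sin θ)` plus `x sin θ · G(θ) - x² cos² θ · g(x sin θ)`, which is the derivative of
`-x cos θ · G(θ)`; this boundary term vanishes at both `θ = 0` and `θ = π/2`.
A function continuous on `[0, ∞)` is handled by extending it to `ℝ` as `y ↦ f (max y 0)`,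
since only its values on `[0, ∞)` enter.
-/

open MeasureTheory Real Set

section ContinuousOnReal

variable {g : ℝ → ℝ} (hg : Continuous g) (x : ℝ)
include hg

theorem hasDerivAt_neg_mul_cos_mul_primitive (θ : ℝ) :
    HasDerivAt (fun t => -(x * cos t) * ∫ s in (0:ℝ)..x * sin t, g s)
      (x * sin θ * (∫ s in (0:ℝ)..x * sin θ, g s) - (x * cos θ) ^ 2 * g (x * sin θ)) θ := by
  have hprim : HasDerivAt (fun y => ∫ s in (0:ℝ)..y, g s) (g (x * sin θ)) (x * sin θ) :=
    intervalIntegral.integral_hasDerivAt_right (hg.intervalIntegrable _ _)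
      hg.stronglyMeasurable.stronglyMeasurableAtFilter hg.continuousAt
  have hG := hprim.comp θ ((hasDerivAt_sin θ).const_mul x)
  have hcos := ((hasDerivAt_cos θ).const_mul x).neg
  exact (hcos.mul hG).congr_deriv (by simp only [Function.comp, Pi.neg_apply]; ring)

theorem integral_mul_sin_mul_primitive_sub_eq_zero :
    ∫ θ in (0:ℝ)..π / 2,
      (x * sin θ * (∫ s in (0:ℝ)..x * sin θ, g s) - (x * cos θ) ^ 2 * g (x * sin θ)) = 0 := by
  have hcont : Continuous fun θ =>
      x * sin θ * (∫ s in (0:ℝ)..x * sin θ, g s) - (x * cos θ) ^ 2 * g (x * sin θ) := by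
    have := intervalIntegral.continuous_primitive (μ := volume)
      (fun a b => hg.intervalIntegrable a b) 0
    fun_prop
  rw [intervalIntegral.integral_eq_sub_of_hasDerivAt
    (fun θ _ => hasDerivAt_neg_mul_cos_mul_primitive hg x θ) (hcont.intervalIntegrable _ _)]
  simp

theorem integral_sq_mul_add_mul_primitive_comp_mul_sin :
    ∫ θ in (0:ℝ)..π / 2,
      ((x * sin θ) ^ 2 * g (x * sin θ) + x * sin θ * ∫ s in (0:ℝ)..x * sin θ, g s)
      = x ^ 2 * ∫ θ in (0:ℝ)..π / 2, g (x * sin θ) := by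
  have hG := intervalIntegral.continuous_primitive (μ := volume)
    (fun a b => hg.intervalIntegrable a b) 0
  have hsplit : ∀ θ, (x * sin θ) ^ 2 * g (x * sin θ) + x * sin θ * ∫ s in (0:ℝ)..x * sin θ, g s
      = x ^ 2 * g (x * sin θ) + (x * sin θ * (∫ s in (0:ℝ)..x * sin θ, g s)
        - (x * cos θ) ^ 2 * g (x * sin θ)) := fun θ => by
    linear_combination x ^ 2 * g (x * sin θ) * sin_sq_add_cos_sq θ
  simp_rw [hsplit]
  rw [intervalIntegral.integral_add (by apply Continuous.intervalIntegrable; fun_prop)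
    (by apply Continuous.intervalIntegrable; fun_prop),
    integral_mul_sin_mul_primitive_sub_eq_zero hg, add_zero, intervalIntegral.integral_const_mul]

end ContinuousOnReal

theorem mul_sin_nonneg_of_mem_uIcc {x θ : ℝ} (hx : 0 ≤ x) (hθ : θ ∈ uIcc 0 (π / 2)) :
    0 ≤ x * sin θ := by
  rw [uIcc_of_le (by positivity)] at hθ
  exact mul_nonneg hx (sin_nonneg_of_nonneg_of_le_pi hθ.1 (by linarith [hθ.2, pi_pos]))

theorem integral_sq_mul_add_mul_primitive_comp_mul_sin_of_continuousOn {f : ℝ → ℝ}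
    (hf : ContinuousOn f (Ici 0)) {x : ℝ} (hx : 0 ≤ x) :
    ∫ θ in (0:ℝ)..π / 2,
      ((x * sin θ) ^ 2 * f (x * sin θ) + x * sin θ * ∫ s in (0:ℝ)..x * sin θ, f s)
      = x ^ 2 * ∫ θ in (0:ℝ)..π / 2, f (x * sin θ) := by
  set g : ℝ → ℝ := fun y => f (max y 0)
  have hg : Continuous g :=
    hf.comp_continuous (continuous_id.max continuous_const) fun y => le_max_right y 0
  have hgf : EqOn g f (Ici 0) := fun y hy => by simp [g, max_eq_left (mem_Ici.mp hy)]
  have hprim : ∀ y, 0 ≤ y → ∫ s in (0:ℝ)..y, g s = ∫ s in (0:ℝ)..y, f s := fun y hy =>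
    intervalIntegral.integral_congr fun s hs => hgf (uIcc_of_le hy ▸ hs).1
  have hagree : ∀ θ ∈ uIcc 0 (π / 2), g (x * sin θ) = f (x * sin θ) ∧
      ∫ s in (0:ℝ)..x * sin θ, g s = ∫ s in (0:ℝ)..x * sin θ, f s := fun θ hθ =>
    have hy := mul_sin_nonneg_of_mem_uIcc hx hθ
    ⟨hgf hy, hprim _ hy⟩
  convert integral_sq_mul_add_mul_primitive_comp_mul_sin hg x using 1
  · refine intervalIntegral.integral_congr fun θ hθ => ?_
    simp only [hagree θ hθ]
  · congr 1
    exact intervalIntegral.integral_congr fun θ hθ => (hagree θ hθ).1.symm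

/-- `ℱ[f](x) = x^{-2} ℱ[[f]_1](x)` for all `x > 0`. -/
theorem stmt_6 (f : ℝ → ℝ) (hf : ContinuousOn f (Set.Ici 0)) (x : ℝ) (hx : 0 < x) :
    ∫ θ in (0:ℝ)..(Real.pi/2), f (x * Real.sin θ)
      = x ^ (-2 : ℝ) *
        ∫ θ in (0:ℝ)..(Real.pi/2),
          (fun y : ℝ => y ^ 2 * f y + y * ∫ s in (0:ℝ)..y, f s) (x * Real.sin θ) := by
  rw [integral_sq_mul_add_mul_primitive_comp_mul_sin_of_continuousOn hf hx.le, ← mul_assoc,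
    rpow_neg hx.le, rpow_two, inv_mul_cancel₀ (by positivity), one_mul]
end

section
/- Let f be continuous on [0,∞) and define [f]_m recursively by [f]_0 = f, [f]_m(x) = x^2 [f]_{m−1}(x) + x ∫_0^x [f]_{m−1}(s) ds. Then for every m ≥ 1 and x > 0, ℱ[f](x) = x^(−2m) ℱ[[f]_m](x), where ℱ[f](x) = ∫_0^{π/2} f(x sin θ) dθ. -/
/-!
With `G` the primitive of a continuous `g` vanishing at `0`, the integrand of `ℱ[[g]₁](x)` is
`x² g(x sin θ) - x · d/dθ (cos θ · G(x sin θ))`, using `sin² + cos² = 1`. The boundary term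
vanishes at both ends (`cos (π/2) = 0`, `G 0 = 0`), so `ℱ[[g]₁](x) = x² ℱ[g](x)`. Since
`[g]_{m+1} = [[g]₁]_m`, induction gives `ℱ[[g]_m](x) = x^{2m} ℱ[g](x)`. A function continuous
on `[0, ∞)` agrees there with the continuous `y ↦ f (max y 0)`, and for `x > 0` both `ℱ` and
`[·]_m` only see values on `[0, ∞)`.
-/

open MeasureTheory

/-- The iterated functions `[f]_m`. -/
noncomputable def iterF (f : ℝ → ℝ) : ℕ → ℝ → ℝ
  | 0 => f
  | m + 1 => fun x => x ^ 2 * iterF f m x + x * ∫ s in (0:ℝ)..x, iterF f m s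

open Real

/-- The paper's `ℱ[f](x)`. -/
noncomputable def sinTransform (f : ℝ → ℝ) (x : ℝ) : ℝ :=
  ∫ θ in (0:ℝ)..(π / 2), f (x * sin θ)

theorem iterF_succ' (f : ℝ → ℝ) (m : ℕ) : iterF f (m + 1) = iterF (iterF f 1) m := by
  induction m with
  | zero => rfl
  | succ m ih => rw [iterF.eq_2 f (m + 1), ih]; rfl

theorem continuous_iterF {g : ℝ → ℝ} (hg : Continuous g) (m : ℕ) : Continuous (iterF g m) := by
  induction m with
  | zero => exact hg
  | succ m ih =>
    have hG := intervalIntegral.continuous_primitive (μ := volume)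
      (fun a b => ih.intervalIntegrable a b) 0
    simp only [iterF]
    fun_prop

theorem iterF_eqOn_Ici {f g : ℝ → ℝ} (hfg : Set.EqOn f g (Set.Ici 0)) (m : ℕ) :
    Set.EqOn (iterF f m) (iterF g m) (Set.Ici 0) := by
  induction m with
  | zero => exact hfg
  | succ m ih =>
    intro y (hy : 0 ≤ y)
    have hint : ∫ s in (0:ℝ)..y, iterF f m s = ∫ s in (0:ℝ)..y, iterF g m s :=
      intervalIntegral.integral_congr fun s hs => ih (Set.uIcc_of_le hy ▸ hs).1
    simp only [iterF, ih (Set.mem_Ici.2 hy), hint]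

theorem sinTransform_congr_of_eqOn_Ici {f g : ℝ → ℝ} (hfg : Set.EqOn f g (Set.Ici 0)) {x : ℝ}
    (hx : 0 ≤ x) : sinTransform f x = sinTransform g x := by
  refine intervalIntegral.integral_congr fun θ hθ => hfg (mul_nonneg hx ?_)
  rw [Set.uIcc_of_le (by positivity)] at hθ
  exact sin_nonneg_of_nonneg_of_le_pi hθ.1 (by linarith [hθ.2, pi_pos])

theorem sinTransform_iterF_one {g : ℝ → ℝ} (hg : Continuous g) (x : ℝ) :
    sinTransform (iterF g 1) x = x ^ 2 * sinTransform g x := by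
  set G : ℝ → ℝ := fun t => ∫ s in (0:ℝ)..t, g s
  have hG : Continuous G :=
    intervalIntegral.continuous_primitive (fun a b => hg.intervalIntegrable a b) 0
  set D : ℝ → ℝ := fun θ => -sin θ * G (x * sin θ) + cos θ * (g (x * sin θ) * (x * cos θ))
  have hD : ∀ θ, HasDerivAt (fun θ => cos θ * G (x * sin θ)) (D θ) θ := fun θ =>
    (hasDerivAt_cos θ).mul <|
      (intervalIntegral.integral_hasDerivAt_right (hg.intervalIntegrable _ _)
        (hg.stronglyMeasurableAtFilter _ _) hg.continuousAt).comp θ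
        ((hasDerivAt_sin θ).const_mul x)
  have hD_cont : Continuous D := by fun_prop
  have hD_int : ∫ θ in (0:ℝ)..(π / 2), D θ = 0 := by
    rw [intervalIntegral.integral_eq_sub_of_hasDerivAt (fun θ _ => hD θ)
      (hD_cont.intervalIntegrable _ _)]
    simp [G]
  calc sinTransform (iterF g 1) x
      = ∫ θ in (0:ℝ)..(π / 2), (x ^ 2 * g (x * sin θ) - x * D θ) := by
        refine intervalIntegral.integral_congr fun θ _ => ?_
        simp only [iterF, D, G]
        linear_combination (x ^ 2 * g (x * sin θ)) * sin_sq_add_cos_sq θ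
    _ = x ^ 2 * sinTransform g x - x * ∫ θ in (0:ℝ)..(π / 2), D θ := by
        rw [intervalIntegral.integral_sub (by apply Continuous.intervalIntegrable; fun_prop)
          (by apply Continuous.intervalIntegrable; fun_prop),
          intervalIntegral.integral_const_mul, intervalIntegral.integral_const_mul, sinTransform]
    _ = x ^ 2 * sinTransform g x := by rw [hD_int, mul_zero, sub_zero]

theorem sinTransform_iterF {g : ℝ → ℝ} (hg : Continuous g) (m : ℕ) (x : ℝ) :
    sinTransform (iterF g m) x = x ^ (2 * m) * sinTransform g x := by
  induction m generalizing g with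
  | zero => simp [iterF]
  | succ m ih =>
    rw [iterF_succ', ih (continuous_iterF hg 1), sinTransform_iterF_one hg]
    ring

theorem stmt_7_general (f : ℝ → ℝ) (hf : ContinuousOn f (Set.Ici 0))
    (m : ℕ) (x : ℝ) (hx : 0 < x) :
    ∫ θ in (0:ℝ)..(Real.pi/2), f (x * Real.sin θ)
      = x ^ (-(2 * m : ℝ)) *
        ∫ θ in (0:ℝ)..(Real.pi/2), iterF f m (x * Real.sin θ) := by
  set g : ℝ → ℝ := fun y => f (max y 0)
  have hg : Continuous g :=
    hf.comp_continuous (continuous_id.max continuous_const) fun y => le_max_right y 0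
  have hgf : Set.EqOn g f (Set.Ici 0) := fun y (hy : 0 ≤ y) => by simp [g, max_eq_left hy]
  change sinTransform f x = x ^ (-(2 * m : ℝ)) * sinTransform (iterF f m) x
  have hpow : x ^ (2 * m : ℝ) = x ^ (2 * m) := by exact_mod_cast rpow_natCast x (2 * m)
  rw [← sinTransform_congr_of_eqOn_Ici hgf hx.le,
    ← sinTransform_congr_of_eqOn_Ici (iterF_eqOn_Ici hgf m) hx.le, sinTransform_iterF hg,
    ← mul_assoc, rpow_neg hx.le, hpow, inv_mul_cancel₀ (by positivity), one_mul]

/-- `ℱ[f](x) = x^{-2m} ℱ[[f]_m](x)` for all `m ≥ 1` and `x > 0`. -/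
theorem stmt_7 (f : ℝ → ℝ) (hf : ContinuousOn f (Set.Ici 0))
    (m : ℕ) (hm : 1 ≤ m) (x : ℝ) (hx : 0 < x) :
    ∫ θ in (0:ℝ)..(Real.pi/2), f (x * Real.sin θ)
      = x ^ (-(2 * m : ℝ)) *
        ∫ θ in (0:ℝ)..(Real.pi/2), iterF f m (x * Real.sin θ) :=
  stmt_7_general f hf m x hx
end

section
/- Suppose f : [0,∞) → ℝ is continuous, f(x) ~ a x^α as x → ∞ (i.e. lim_{x→∞} x^(−α) f(x) = a ≠ 0) with α > −1. Then ℱ[f](x) := ∫_0^{π/2} f(x sin θ)dθ satisfies lim_{x→∞} x^(−α) ℱ[f](x) = a·𝒢(α), where 𝒢(α) := (√π/2)·Γ((1+α)/2)/Γ(1+α/2). -/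
/-!
Dominated convergence: for every `θ ∈ (0, π/2]`, `x^(-α) f(x sin θ) → a (sin θ)^α`, and for
`x ≥ 1` these functions are bounded by `C + D (sin θ)^α` (split according to whether `x sin θ`
lies in the compact range where `f` is bounded, or in the range where `|f y| ≤ C y^α`). The
majorant is integrable because `α > -1` and `sin θ ≥ 2θ/π`. So the limit is `a ∫ (sin θ)^α`,
and the substitution `t = sin² θ` turns this integral into `B((1+α)/2, 1/2) / 2`.
-/

open MeasureTheory Filter Real Set

lemma sin_pos_of_mem_Ioc {θ : ℝ} (hθ : θ ∈ Ioc 0 (π / 2)) : 0 < sin θ :=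
  sin_pos_of_pos_of_lt_pi hθ.1 (by linarith [hθ.2, pi_pos])

lemma integral_rpow_mul_one_sub_rpow {u v : ℝ} (hu : 0 < u) (hv : 0 < v) :
    ∫ x in (0:ℝ)..1, x ^ (u - 1) * (1 - x) ^ (v - 1) = Gamma u * Gamma v / Gamma (u + v) := by
  have hβ : Complex.betaIntegral u v = ↑(∫ x in (0:ℝ)..1, x ^ (u - 1) * (1 - x) ^ (v - 1)) := by
    rw [Complex.betaIntegral, ← intervalIntegral.integral_ofReal]
    refine intervalIntegral.integral_congr fun x hx => ?_
    rw [uIcc_of_le zero_le_one] at hx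
    push_cast
    rw [Complex.ofReal_cpow hx.1, Complex.ofReal_cpow (sub_nonneg.2 hx.2)]
    push_cast
    ring
  simpa [hβ, ProbabilityTheory.beta] using
    (ProbabilityTheory.beta_eq_betaIntegralReal u v hu hv).symm

lemma sin_sq_rpow_mul_one_sub_sin_sq_rpow_mul_deriv {α θ : ℝ} (hθ : θ ∈ Ioo 0 (π / 2)) :
    (sin θ ^ 2) ^ ((1 + α) / 2 - 1) * (1 - sin θ ^ 2) ^ ((1:ℝ) / 2 - 1) * (2 * sin θ * cos θ)
      = 2 * sin θ ^ α := by
  have hs : 0 < sin θ := sin_pos_of_mem_Ioc (Ioo_subset_Ioc_self hθ)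
  have hc : 0 < cos θ := cos_pos_of_mem_Ioo ⟨by linarith [hθ.1, pi_pos], hθ.2⟩
  have hsin : (sin θ ^ 2) ^ ((1 + α) / 2 - 1) * sin θ = sin θ ^ α := by
    rw [← rpow_natCast, ← rpow_mul hs.le, ← rpow_add_one hs.ne']
    norm_num
    ring_nf
  have hcos : (1 - sin θ ^ 2) ^ ((1:ℝ) / 2 - 1) * cos θ = 1 := by
    rw [← cos_sq', ← rpow_natCast, ← rpow_mul hc.le]
    norm_num
    rw [rpow_neg_one, inv_mul_cancel₀ hc.ne']
  linear_combination 2 * cos θ * (1 - sin θ ^ 2) ^ ((1:ℝ) / 2 - 1) * hsin + 2 * sin θ ^ α * hcos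

lemma integral_sin_rpow {α : ℝ} (hα : -1 < α) :
    ∫ θ in (0:ℝ)..π / 2, sin θ ^ α = √π / 2 * Gamma ((1 + α) / 2) / Gamma (1 + α / 2) := by
  have hpi : (0:ℝ) ≤ π / 2 := by positivity
  set g : ℝ → ℝ := fun t => t ^ ((1 + α) / 2 - 1) * (1 - t) ^ ((1:ℝ) / 2 - 1)
  have hderiv_nonneg : ∀ θ ∈ Ioo (min 0 (π / 2)) (max 0 (π / 2)), 0 ≤ 2 * sin θ * cos θ := by
    rw [min_eq_left hpi, max_eq_right hpi]
    intro θ hθ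
    have := sin_pos_of_mem_Ioc (Ioo_subset_Ioc_self hθ)
    have := cos_pos_of_mem_Ioo ⟨by linarith [hθ.1, pi_pos], hθ.2⟩
    positivity
  calc ∫ θ in (0:ℝ)..π / 2, sin θ ^ α
      = 2⁻¹ * ∫ θ in (0:ℝ)..π / 2, (g ∘ fun θ => sin θ ^ 2) θ * (2 * sin θ * cos θ) := by
        rw [eq_inv_mul_iff_mul_eq₀ two_ne_zero, ← intervalIntegral.integral_const_mul,
          intervalIntegral.integral_of_le hpi, intervalIntegral.integral_of_le hpi,
          integral_Ioc_eq_integral_Ioo, integral_Ioc_eq_integral_Ioo]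
        exact setIntegral_congr_fun measurableSet_Ioo
          fun θ hθ => (sin_sq_rpow_mul_one_sub_sin_sq_rpow_mul_deriv hθ).symm
    _ = 2⁻¹ * ∫ t in (0:ℝ)..1, g t := by
        rw [intervalIntegral.integral_comp_mul_deriv_of_deriv_nonneg (by fun_prop)
          (fun θ _ => by simpa using (hasDerivAt_sin θ).fun_pow 2) hderiv_nonneg]
        simp
    _ = √π / 2 * Gamma ((1 + α) / 2) / Gamma (1 + α / 2) := by
        rw [integral_rpow_mul_one_sub_rpow (by linarith) one_half_pos, Gamma_one_half_eq,
          show (1 + α) / 2 + 1 / 2 = 1 + α / 2 by ring]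
        ring

lemma integrableOn_sin_rpow {α : ℝ} (hα : -1 < α) :
    IntegrableOn (fun θ => sin θ ^ α) (Ioc 0 (π / 2)) := by
  have hmajorant : IntegrableOn (fun θ => 1 + (2 / π) ^ α * θ ^ α) (Ioc 0 (π / 2)) :=
    (integrable_const _).add <| Integrable.const_mul
      ((intervalIntegrable_iff_integrableOn_Ioc_of_le (by positivity)).1
        (intervalIntegral.intervalIntegrable_rpow' hα)) _
  refine hmajorant.mono' ?_ ((ae_restrict_mem measurableSet_Ioc).mono fun θ hθ => ?_)
  · refine ContinuousOn.aestronglyMeasurable (fun θ hθ => ?_) measurableSet_Ioc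
    exact (continuous_sin.continuousAt.rpow_const
      (Or.inl (sin_pos_of_mem_Ioc hθ).ne')).continuousWithinAt
  have hs : 0 < sin θ := sin_pos_of_mem_Ioc hθ
  rw [norm_of_nonneg (rpow_nonneg hs.le _)]
  rcases le_or_gt 0 α with hα0 | hα0
  · have : 0 ≤ (2 / π) ^ α * θ ^ α := by have := hθ.1; positivity
    linarith [rpow_le_one hs.le (sin_le_one θ) hα0]
  · have hjordan := rpow_le_rpow_of_nonpos (by have := hθ.1; positivity)
      (mul_le_sin hθ.1.le hθ.2) hα0.le
    rw [mul_rpow (by positivity) hθ.1.le] at hjordan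
    linarith

section Asymptotics

variable {f : ℝ → ℝ} {a α : ℝ}

lemma tendsto_rpow_neg_mul_comp_mul (hquant : Tendsto (fun x => x ^ (-α) * f x) atTop (nhds a))
    {s : ℝ} (hs : 0 < s) :
    Tendsto (fun x => x ^ (-α) * f (x * s)) atTop (nhds (a * s ^ α)) := by
  refine ((hquant.comp (tendsto_id.atTop_mul_const hs)).mul_const (s ^ α)).congr' ?_
  filter_upwards [eventually_gt_atTop 0] with x hx
  have hinv : s ^ (-α) * s ^ α = 1 := by rw [← rpow_add hs]; simp
  simp only [Function.comp_apply, id, mul_rpow hx.le hs.le]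
  linear_combination x ^ (-α) * f (x * s) * hinv

lemma exists_abs_le_of_tendsto_rpow_neg_mul (hf : ContinuousOn f (Ici 0))
    (hquant : Tendsto (fun x => x ^ (-α) * f x) atTop (nhds a)) :
    ∃ C y₀, 0 ≤ C ∧ 0 < y₀ ∧ (∀ y ∈ Icc 0 y₀, |f y| ≤ C) ∧ ∀ y ≥ y₀, |f y| ≤ C * y ^ α := by
  obtain ⟨y₁, hy₁⟩ :=
    (hquant.norm.eventually (eventually_le_nhds (lt_add_one ‖a‖))).exists_forall_of_atTop
  set y₀ := max y₁ 1
  obtain ⟨M, hM⟩ := isCompact_Icc.exists_bound_of_continuousOn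
    (hf.mono (Icc_subset_Ici_self : Icc 0 y₀ ⊆ Ici 0))
  refine ⟨max M (‖a‖ + 1), y₀, by positivity, by positivity,
    fun y hy => (hM y hy).trans (le_max_left _ _), fun y hy => ?_⟩
  have hy0 : 0 < y := by linarith [le_max_right y₁ 1]
  have h := hy₁ y (le_of_max_le_left hy)
  rw [norm_mul, norm_of_nonneg (rpow_nonneg hy0.le _), rpow_neg hy0.le, ← div_eq_inv_mul,
    div_le_iff₀ (rpow_pos_of_pos hy0 _)] at h
  exact h.trans (mul_le_mul_of_nonneg_right (le_max_right _ _) (rpow_nonneg hy0.le _))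

lemma abs_rpow_neg_mul_comp_mul_le {C y₀ : ℝ} (hC : 0 ≤ C) (hy₀ : 0 < y₀)
    (hsmall : ∀ y ∈ Icc 0 y₀, |f y| ≤ C) (hlarge : ∀ y ≥ y₀, |f y| ≤ C * y ^ α)
    {x s : ℝ} (hx : 1 ≤ x) (hs : 0 < s) :
    |x ^ (-α) * f (x * s)| ≤ C + C * (1 + y₀ ^ (-α)) * s ^ α := by
  have hx0 : 0 < x := zero_lt_one.trans_le hx
  have hsα : 0 ≤ C * s ^ α := by positivity
  have hy₀α : 0 ≤ C * y₀ ^ (-α) * s ^ α := by positivity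
  rw [abs_mul, abs_of_pos (rpow_pos_of_pos hx0 _)]
  rcases le_or_gt y₀ (x * s) with hxs | hxs
  · calc x ^ (-α) * |f (x * s)| ≤ x ^ (-α) * (C * (x * s) ^ α) := by gcongr; exact hlarge _ hxs
      _ = C * s ^ α := by
        rw [mul_rpow hx0.le hs.le, rpow_neg hx0.le]
        field_simp
      _ ≤ C + C * (1 + y₀ ^ (-α)) * s ^ α := by linarith
  have hfxs : |f (x * s)| ≤ C := hsmall _ ⟨by positivity, hxs.le⟩
  rcases le_or_gt 0 α with hα | hα
  · calc x ^ (-α) * |f (x * s)| ≤ 1 * C := by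
          gcongr
          exact rpow_le_one_of_one_le_of_nonpos hx (by linarith)
      _ ≤ C + C * (1 + y₀ ^ (-α)) * s ^ α := by linarith
  · calc x ^ (-α) * |f (x * s)| ≤ (y₀ / s) ^ (-α) * C := by
          gcongr
          · linarith
          · rw [le_div_iff₀ hs]
            exact hxs.le
      _ = C * y₀ ^ (-α) * s ^ α := by
        rw [div_rpow hy₀.le hs.le, rpow_neg hs.le]
        field_simp
      _ ≤ C + C * (1 + y₀ ^ (-α)) * s ^ α := by linarith

lemma tendsto_rpow_neg_mul_integral_comp_mul_sin (hf : ContinuousOn f (Ici 0)) (hα : -1 < α)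
    (hquant : Tendsto (fun x => x ^ (-α) * f x) atTop (nhds a)) :
    Tendsto (fun x => x ^ (-α) * ∫ θ in (0:ℝ)..π / 2, f (x * sin θ)) atTop
      (nhds (a * ∫ θ in (0:ℝ)..π / 2, sin θ ^ α)) := by
  have hpi : (0:ℝ) ≤ π / 2 := by positivity
  obtain ⟨C, y₀, hC, hy₀, hsmall, hlarge⟩ := exists_abs_le_of_tendsto_rpow_neg_mul hf hquant
  simp only [intervalIntegral.integral_of_le hpi, ← integral_const_mul]
  refine tendsto_integral_filter_of_dominated_convergence
    (fun θ => C + C * (1 + y₀ ^ (-α)) * sin θ ^ α) ?_ ?_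
    ((integrable_const C).add ((integrableOn_sin_rpow hα).const_mul _)) ?_
  · filter_upwards [eventually_ge_atTop 0] with x hx
    refine ContinuousOn.aestronglyMeasurable (continuousOn_const.mul (hf.comp (by fun_prop)
      fun θ hθ => ?_)) measurableSet_Ioc
    exact mul_nonneg hx (sin_pos_of_mem_Ioc hθ).le
  · filter_upwards [eventually_ge_atTop 1] with x hx
    filter_upwards [ae_restrict_mem measurableSet_Ioc] with θ hθ
    exact abs_rpow_neg_mul_comp_mul_le hC hy₀ hsmall hlarge hx (sin_pos_of_mem_Ioc hθ)
  · filter_upwards [ae_restrict_mem measurableSet_Ioc] with θ hθ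
    exact tendsto_rpow_neg_mul_comp_mul hquant (sin_pos_of_mem_Ioc hθ)

end Asymptotics

theorem stmt_8_general (f : ℝ → ℝ) (hf : ContinuousOn f (Set.Ici 0))
    (a α : ℝ) (hα : -1 < α)
    (hquant : Tendsto (fun x : ℝ => x ^ (-α) * f x) atTop (nhds a)) :
    Tendsto (fun x : ℝ => x ^ (-α) * ∫ θ in (0:ℝ)..(Real.pi/2), f (x * Real.sin θ))
      atTop
      (nhds (a * ((Real.sqrt Real.pi / 2) *
        Real.Gamma ((1 + α)/2) / Real.Gamma (1 + α/2)))) := by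
  rw [← integral_sin_rpow hα]
  exact tendsto_rpow_neg_mul_integral_comp_mul_sin hf hα hquant

/-- If `f(x) ~ a x^α` at infinity with `α > −1`, then `ℱ[f](x) ~ a 𝒢(α) x^α`,
where `𝒢(α) = (√π/2) Γ((1+α)/2)/Γ(1+α/2)`. -/
theorem stmt_8 (f : ℝ → ℝ) (hf : ContinuousOn f (Set.Ici 0))
    (a α : ℝ) (ha : a ≠ 0) (hα : -1 < α)
    (hquant : Tendsto (fun x : ℝ => x ^ (-α) * f x) atTop (nhds a)) :
    Tendsto (fun x : ℝ => x ^ (-α) * ∫ θ in (0:ℝ)..(Real.pi/2), f (x * Real.sin θ))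
      atTop
      (nhds (a * ((Real.sqrt Real.pi / 2) *
        Real.Gamma ((1 + α)/2) / Real.Gamma (1 + α/2)))) :=
  stmt_8_general f hf a α hα hquant
end

section
/- Suppose f : [0,∞) → ℝ is continuous and lim_{x→∞} x f(x) = a ≠ 0. Then lim_{x→∞} (x / log x) · ℱ[f](x) = a, where ℱ[f](x) = ∫_0^{π/2} f(x sin θ) dθ. -/
/-!
Cut the integral at a small angle `u`. On `[0, u]` the integrand is bounded, so that piece is
`O(u)`. On `[u, π/2]` we have `x f(x sin θ) = (a + o(1)) / sin θ`, and
`∫_u^{π/2} dθ / sin θ = -log tan (u/2)`; taking `tan (u/2) = T/x` for a fixed large `T` turns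
this into `log x - log T`. Hence `x ℱ[f](x) = a log x + o(log x)`.
-/

open MeasureTheory Filter

open Real Set Topology

theorem hasDerivAt_log_tan_half {θ : ℝ} (h₀ : 0 < θ) (hπ : θ < π) :
    HasDerivAt (fun t => log (tan (t / 2))) (sin θ)⁻¹ θ := by
  have hs : 0 < sin (θ / 2) := sin_pos_of_pos_of_lt_pi (by linarith) (by linarith)
  have hc : 0 < cos (θ / 2) := cos_pos_of_mem_Ioo ⟨by linarith, by linarith⟩
  have htan : HasDerivAt (fun t => tan (t / 2)) (1 / cos (θ / 2) ^ 2 * (1 / 2)) θ :=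
    HasDerivAt.comp (h₂ := tan) θ (Real.hasDerivAt_tan hc.ne') ((hasDerivAt_id' θ).div_const 2)
  convert htan.log (by rw [tan_eq_sin_div_cos]; positivity) using 1
  rw [tan_eq_sin_div_cos, show θ = 2 * (θ / 2) by ring, sin_two_mul]
  field_simp

theorem intervalIntegrable_inv_sin {a b : ℝ} (ha : a ∈ Ioo 0 π) (hb : b ∈ Ioo 0 π) :
    IntervalIntegrable (fun θ => (sin θ)⁻¹) volume a b :=
  (continuousOn_sin.inv₀ fun θ hθ => by
    rcases mem_uIcc.1 hθ with h | h <;>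
      exact (sin_pos_of_pos_of_lt_pi (by linarith [ha.1, hb.1]) (by linarith [ha.2, hb.2])).ne'
    ).intervalIntegrable

theorem integral_inv_sin {u : ℝ} (hu : 0 < u) (hu' : u < π) :
    ∫ θ in u..π / 2, (sin θ)⁻¹ = -log (tan (u / 2)) := by
  have hπ := pi_pos
  rw [intervalIntegral.integral_eq_sub_of_hasDerivAt
    (fun θ hθ => by
      rcases mem_uIcc.1 hθ with h | h <;>
        exact hasDerivAt_log_tan_half (by linarith) (by linarith))
    (intervalIntegrable_inv_sin ⟨hu, hu'⟩ ⟨by linarith, by linarith⟩)]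
  rw [div_div, show (2 : ℝ) * 2 = 4 by norm_num, tan_pi_div_four, log_one, zero_sub]

theorem sin_two_mul_arctan (t : ℝ) : sin (2 * arctan t) = 2 * t / (1 + t ^ 2) := by
  have htan := tan_arctan t
  rw [tan_eq_sin_div_cos, div_eq_iff (cos_arctan_pos t).ne'] at htan
  rw [sin_two_mul, htan, mul_assoc, mul_assoc, ← sq, cos_sq_arctan]
  ring

theorem continuousOn_comp_mul_sin {f : ℝ → ℝ} (hf : ContinuousOn f (Ici 0)) {x : ℝ}
    (hx : 0 ≤ x) :
    ContinuousOn (fun θ => f (x * sin θ)) (Icc 0 π) :=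
  hf.comp (by fun_prop) fun _ hθ => mul_nonneg hx (sin_nonneg_of_nonneg_of_le_pi hθ.1 hθ.2)

theorem abs_integral_comp_mul_sin_le {f : ℝ → ℝ} {x u C : ℝ} (hx : 0 ≤ x) (hu : 0 ≤ u)
    (hu' : u ≤ π / 2) (hC : ∀ y ∈ Icc 0 (x * sin u), |f y| ≤ C) :
    |∫ θ in 0..u, f (x * sin θ)| ≤ C * u := by
  have := intervalIntegral.norm_integral_le_of_norm_le_const (f := fun θ => f (x * sin θ))
    (C := C) fun θ hθ => by
      rw [uIoc_of_le hu] at hθ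
      have hθπ : θ ≤ π := by linarith [hθ.2, pi_pos]
      exact hC _ ⟨mul_nonneg hx (sin_nonneg_of_nonneg_of_le_pi hθ.1.le hθπ),
        mul_le_mul_of_nonneg_left
          (sin_le_sin_of_le_of_le_pi_div_two (by linarith [hθ.1, pi_pos]) hu' hθ.2) hx⟩
  rwa [sub_zero, abs_of_nonneg hu] at this

theorem abs_integral_mul_sub_inv_sin_le {f : ℝ → ℝ} {x u a ε : ℝ} (hx : 0 ≤ x)
    (hu : 0 < u) (hu' : u ≤ π / 2) (hε : ∀ y, x * sin u ≤ y → |y * f y - a| ≤ ε) :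
    |∫ θ in u..π / 2, (x * f (x * sin θ) - a * (sin θ)⁻¹)|
      ≤ ε * ∫ θ in u..π / 2, (sin θ)⁻¹ := by
  have hπ := pi_pos
  rw [← intervalIntegral.integral_const_mul, ← Real.norm_eq_abs]
  refine intervalIntegral.norm_integral_le_of_norm_le hu' (.of_forall fun θ hθ => ?_)
    ((intervalIntegrable_inv_sin ⟨hu, by linarith⟩ ⟨by linarith, by linarith⟩).const_mul ε)
  have hs : 0 < sin θ := sin_pos_of_pos_of_lt_pi (hu.trans hθ.1) (by linarith [hθ.2])
  rw [Real.norm_eq_abs, show x * f (x * sin θ) - a * (sin θ)⁻¹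
    = (x * sin θ * f (x * sin θ) - a) / sin θ by field_simp, abs_div, abs_of_pos hs,
    div_eq_mul_inv]
  exact mul_le_mul_of_nonneg_right
    (hε _ (mul_le_mul_of_nonneg_left (sin_le_sin_of_le_of_le_pi_div_two
      (by linarith) hθ.2 hθ.1.le) hx)) (inv_nonneg.2 hs.le)

theorem abs_mul_integral_sub_le {f : ℝ → ℝ} (hf : ContinuousOn f (Ici 0)) {x u a C ε : ℝ}
    (hx : 0 ≤ x) (hu : 0 < u) (hu' : u ≤ π / 2)
    (hC : ∀ y ∈ Icc 0 (x * sin u), |f y| ≤ C)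
    (hε : ∀ y, x * sin u ≤ y → |y * f y - a| ≤ ε) :
    |x * (∫ θ in 0..π / 2, f (x * sin θ)) - a * ∫ θ in u..π / 2, (sin θ)⁻¹|
      ≤ C * x * u + ε * ∫ θ in u..π / 2, (sin θ)⁻¹ := by
  have hπ := pi_pos
  have hcont := continuousOn_comp_mul_sin hf hx
  have hint₁ : IntervalIntegrable (fun θ => f (x * sin θ)) volume 0 u :=
    (hcont.mono (by rw [uIcc_of_le hu.le]; exact Icc_subset_Icc_right (by linarith)))
      |>.intervalIntegrable
  have hint₂ : IntervalIntegrable (fun θ => f (x * sin θ)) volume u (π / 2) :=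
    (hcont.mono (by rw [uIcc_of_le hu']; exact Icc_subset_Icc hu.le (by linarith)))
      |>.intervalIntegrable
  have hinv : IntervalIntegrable (fun θ => (sin θ)⁻¹) volume u (π / 2) :=
    intervalIntegrable_inv_sin ⟨hu, by linarith⟩ ⟨by linarith, by linarith⟩
  have hsplit : x * (∫ θ in 0..π / 2, f (x * sin θ)) - a * ∫ θ in u..π / 2, (sin θ)⁻¹
      = x * (∫ θ in 0..u, f (x * sin θ))
        + ∫ θ in u..π / 2, (x * f (x * sin θ) - a * (sin θ)⁻¹) := by
    rw [intervalIntegral.integral_sub (hint₂.const_mul x) (hinv.const_mul a),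
      intervalIntegral.integral_const_mul, intervalIntegral.integral_const_mul,
      ← intervalIntegral.integral_add_adjacent_intervals hint₁ hint₂]
    ring
  calc _ ≤ |x * (∫ θ in 0..u, f (x * sin θ))|
        + |∫ θ in u..π / 2, (x * f (x * sin θ) - a * (sin θ)⁻¹)| :=
        hsplit ▸ abs_add_le _ _
    _ ≤ x * (C * u) + ε * ∫ θ in u..π / 2, (sin θ)⁻¹ := by
      rw [abs_mul, abs_of_nonneg hx]
      gcongr
      · exact abs_integral_comp_mul_sin_le hx hu.le hu' hC
      · exact abs_integral_mul_sub_inv_sin_le hx hu hu' hε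
    _ = _ := by ring

theorem abs_mul_integral_sub_log_le {f : ℝ → ℝ} (hf : ContinuousOn f (Ici 0))
    {x T a C ε : ℝ} (hT : 0 < T) (hTx : T ≤ x)
    (hC : ∀ y ∈ Icc 0 (2 * T), |f y| ≤ C) (hε : ∀ y, T ≤ y → |y * f y - a| ≤ ε) :
    |x * (∫ θ in 0..π / 2, f (x * sin θ)) - a * log (x / T)|
      ≤ 2 * C * T + ε * log (x / T) := by
  have hx : 0 < x := hT.trans_le hTx
  -- The cut `u = 2 arctan t` makes `tan (u/2) = t = T/x`, so the comparison integral is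
  -- exactly `log (x/T)`.
  set t := T / x with ht
  have ht0 : 0 < t := div_pos hT hx
  have ht1 : t ≤ 1 := (div_le_one hx).2 hTx
  have hxt : x * t = T := mul_div_cancel₀ T hx.ne'
  have hu : 0 < 2 * arctan t := by have := arctan_pos.2 ht0; positivity
  have hu' : 2 * arctan t ≤ π / 2 := by
    have := arctan_le_arctan_iff.2 ht1
    rw [arctan_one] at this
    linarith
  have hS : ∫ θ in 2 * arctan t..π / 2, (sin θ)⁻¹ = log (x / T) := by
    rw [integral_inv_sin hu (by linarith [pi_pos]), mul_div_cancel_left₀ _ two_ne_zero,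
      tan_arctan, ht, ← log_inv, inv_div]
  have hxsin : x * sin (2 * arctan t) = 2 * T / (1 + t ^ 2) := by
    rw [sin_two_mul_arctan, ← hxt]
    ring
  have hxsin_ge : T ≤ x * sin (2 * arctan t) := by
    rw [hxsin, le_div_iff₀ (by positivity)]
    nlinarith
  have hxsin_le : x * sin (2 * arctan t) ≤ 2 * T := by
    rw [hxsin]
    exact div_le_self (by positivity) (by nlinarith)
  have hxu : x * (2 * arctan t) ≤ 2 * T := by
    have := le_tan (arctan_nonneg.2 ht0.le) (arctan_lt_pi_div_two t)
    rw [tan_arctan] at this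
    nlinarith
  have hC0 : 0 ≤ C := (abs_nonneg _).trans (hC 0 ⟨le_rfl, by positivity⟩)
  have key := abs_mul_integral_sub_le hf hx.le hu hu'
    (fun y hy => hC y ⟨hy.1, hy.2.trans hxsin_le⟩) (fun y hy => hε y (hxsin_ge.trans hy))
  rw [hS] at key
  calc _ ≤ C * (x * (2 * arctan t)) + ε * log (x / T) := by rwa [← mul_assoc]
    _ ≤ 2 * C * T + ε * log (x / T) := by nlinarith

theorem stmt_9_general (f : ℝ → ℝ) (hf : ContinuousOn f (Set.Ici 0))
    (a : ℝ)
    (hquant : Tendsto (fun x : ℝ => x * f x) atTop (nhds a)) :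
    Tendsto (fun x : ℝ => (x / Real.log x) *
        ∫ θ in (0:ℝ)..(Real.pi/2), f (x * Real.sin θ))
      atTop (nhds a) := by
  rw [Metric.tendsto_nhds]
  intro ε hε
  obtain ⟨T, hT0, hT⟩ : ∃ T > 0, ∀ y, T ≤ y → |y * f y - a| ≤ ε / 2 := by
    obtain ⟨T, hT⟩ := eventually_atTop.1 (Metric.tendsto_nhds.1 hquant (ε / 2) (half_pos hε))
    exact ⟨max T 1, by positivity, fun y hy => (hT y (le_of_max_le_left hy)).le⟩
  obtain ⟨C, hC⟩ := isCompact_Icc.exists_bound_of_continuousOn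
    (hf.mono (Icc_subset_Ici_self : Icc 0 (2 * T) ⊆ _))
  have hK : Tendsto (fun x => (2 * C * T + |a| * |log T| - ε / 2 * log T) / log x)
      atTop (𝓝 0) :=
    tendsto_const_nhds.div_atTop tendsto_log_atTop
  filter_upwards [hK.eventually (gt_mem_nhds (half_pos hε)), eventually_ge_atTop T,
    eventually_gt_atTop 1] with x hKx hTx hx1
  have hL : 0 < log x := log_pos hx1
  have key := abs_mul_integral_sub_log_le hf hT0 hTx hC hT
  rw [log_div (by positivity) hT0.ne'] at key
  rw [div_lt_iff₀ hL] at hKx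
  rw [Real.dist_eq, show x / log x * (∫ θ in 0..π / 2, f (x * sin θ)) - a
      = (x * (∫ θ in 0..π / 2, f (x * sin θ)) - a * log x) / log x by field_simp,
    abs_div, abs_of_pos hL, div_lt_iff₀ hL]
  calc _ = |(x * (∫ θ in 0..π / 2, f (x * sin θ)) - a * (log x - log T)) - a * log T| := by
        ring_nf
    _ ≤ |x * (∫ θ in 0..π / 2, f (x * sin θ)) - a * (log x - log T)| + |a| * |log T| := by
        rw [← abs_mul]; exact abs_sub _ _
    _ < ε * log x := by linarith

/-- If `lim_{x→∞} x f(x) = a ≠ 0` then `lim_{x→∞} (x/log x) ℱ[f](x) = a`. -/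
theorem stmt_9 (f : ℝ → ℝ) (hf : ContinuousOn f (Set.Ici 0))
    (a : ℝ) (ha : a ≠ 0)
    (hquant : Tendsto (fun x : ℝ => x * f x) atTop (nhds a)) :
    Tendsto (fun x : ℝ => (x / Real.log x) *
        ∫ θ in (0:ℝ)..(Real.pi/2), f (x * Real.sin θ))
      atTop (nhds a) :=
  stmt_9_general f hf a hquant
end

section
/- For any continuous f on (0,1), ℱ[𝓑[f]](x) = √(1+x²) · 𝓑[ℱ[f]](x) for all x > 0, where ℱ[g](x) = ∫_0^{π/2} g(x sin θ)dθ and 𝓑[f](x) = (1/(1+x²)) f(x/√(1+x²)). -/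
/-!
The substitution `tan φ = √(1+x²) tan θ` maps the quarter circle onto itself, turns
`x sin θ / √(1 + x² sin² θ)` into `(x / √(1+x²)) sin φ`, and has Jacobian
`dφ/dθ = √(1+x²) / (1 + x² sin² θ)`; so both sides equal
`(1+x²)^(-1/2) ∫₀^{π/2} f(x sin φ / √(1+x²)) dφ`.
-/

open Real Set

/-- The polar angle, in `[-π/2, π/2]`, of the point `(cos θ, a sin θ)`: for `cos θ > 0` it is
the angle `φ` with `tan φ = a tan θ`. Written with `arcsin` rather than `arctan (a * tan θ)` so
that it stays continuous at `θ = π/2`, where `tan` takes the junk value `0`. -/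
noncomputable def scaledAngle (a θ : ℝ) : ℝ :=
  arcsin (a * sin θ / √(cos θ ^ 2 + (a * sin θ) ^ 2))

lemma cos_sq_add_mul_sin_sq_pos {a : ℝ} (ha : a ≠ 0) (θ : ℝ) :
    0 < cos θ ^ 2 + (a * sin θ) ^ 2 := by
  rcases eq_or_ne (cos θ) 0 with hc | hc
  · have hs : sin θ ≠ 0 := by
      intro hs
      simpa [hs, hc] using sin_sq_add_cos_sq θ
    positivity
  · positivity

lemma sin_scaledAngle (a θ : ℝ) :
    sin (scaledAngle a θ) = a * sin θ / √(cos θ ^ 2 + (a * sin θ) ^ 2) := by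
  have h : |a * sin θ / √(cos θ ^ 2 + (a * sin θ) ^ 2)| ≤ 1 := by
    rw [abs_div, abs_of_nonneg (sqrt_nonneg _)]
    exact div_le_one_of_le₀ (abs_le_sqrt (by nlinarith)) (sqrt_nonneg _)
  exact sin_arcsin (abs_le.mp h).1 (abs_le.mp h).2

lemma scaledAngle_zero (a : ℝ) : scaledAngle a 0 = 0 := by
  simp [scaledAngle]

lemma scaledAngle_pi_div_two {a : ℝ} (ha : 0 < a) : scaledAngle a (π / 2) = π / 2 := by
  simp [scaledAngle, sqrt_sq ha.le, ha.ne']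

lemma continuous_scaledAngle {a : ℝ} (ha : a ≠ 0) : Continuous (scaledAngle a) :=
  continuous_arcsin.comp <| by
    refine (continuous_const.mul continuous_sin).div (by fun_prop) fun θ => ?_
    exact (sqrt_pos.mpr (cos_sq_add_mul_sin_sq_pos ha θ)).ne'

lemma scaledAngle_mem_Icc {a θ : ℝ} (ha : 0 ≤ a) (hθ : θ ∈ Icc 0 π) :
    scaledAngle a θ ∈ Icc 0 (π / 2) :=
  ⟨arcsin_nonneg.mpr (div_nonneg (mul_nonneg ha (sin_nonneg_of_nonneg_of_le_pi hθ.1 hθ.2))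
    (sqrt_nonneg _)), arcsin_le_pi_div_two _⟩

lemma hasDerivAt_scaledAngle (a : ℝ) {θ : ℝ} (hθ : 0 < cos θ) :
    HasDerivAt (scaledAngle a) (a / (cos θ ^ 2 + (a * sin θ) ^ 2)) θ := by
  have hr : 0 < cos θ ^ 2 + (a * sin θ) ^ 2 := by positivity
  have hsqrt : HasDerivAt (fun t => √(cos t ^ 2 + (a * sin t) ^ 2))
      ((2 * cos θ * -sin θ + 2 * (a * sin θ) * (a * cos θ)) /
        (2 * √(cos θ ^ 2 + (a * sin θ) ^ 2))) θ :=
    (((hasDerivAt_cos θ).pow 2).add (((hasDerivAt_sin θ).const_mul a).pow 2)).sqrt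
      hr.ne' |>.congr_deriv (by simp)
  have hu := ((hasDerivAt_sin θ).const_mul a).div hsqrt (sqrt_pos.mpr hr).ne'
  obtain ⟨s, hs⟩ : ∃ s, √(cos θ ^ 2 + (a * sin θ) ^ 2) = s := ⟨_, rfl⟩
  have hs0 : 0 < s := hs ▸ sqrt_pos.mpr hr
  have hs2 : s ^ 2 = cos θ ^ 2 + (a * sin θ) ^ 2 := hs ▸ sq_sqrt hr.le
  have hsqrt_one_sub : √(1 - (a * sin θ / s) ^ 2) = cos θ / s := by
    rw [← sqrt_sq (by positivity : 0 ≤ cos θ / s)]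
    congr 1
    field_simp
    linear_combination hs2
  have harg : a * sin θ / s ≠ 1 ∧ a * sin θ / s ≠ -1 := by
    have : cos θ / s ≠ 0 := by positivity
    constructor <;> intro h <;> simp [h] at hsqrt_one_sub <;> exact this hsqrt_one_sub.symm
  rw [← hs] at harg
  have hφ := (hasDerivAt_arcsin harg.2 harg.1).comp θ hu
  rw [hs] at hφ
  refine hφ.congr_deriv ?_
  rw [hsqrt_one_sub, ← hs2]
  field_simp
  linear_combination a * hs2 + a * sin_sq_add_cos_sq θ

theorem integral_comp_scaledAngle {a : ℝ} (ha : 0 < a) {g : ℝ → ℝ}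
    (hg : ContinuousOn g (Icc 0 (π / 2))) :
    ∫ θ in (0 : ℝ)..π / 2, g (scaledAngle a θ) * (a / (cos θ ^ 2 + (a * sin θ) ^ 2)) =
      ∫ y in (0 : ℝ)..π / 2, g y := by
  have hpi : (0 : ℝ) ≤ π / 2 := pi_div_two_pos.le
  have h := intervalIntegral.integral_comp_mul_deriv'' (a := 0) (b := π / 2) (g := g)
    (continuous_scaledAngle ha.ne').continuousOn
    (fun θ hθ => by
      rw [min_eq_left hpi, max_eq_right hpi] at hθ
      exact (hasDerivAt_scaledAngle a
        (cos_pos_of_mem_Ioo ⟨by linarith [hθ.1, pi_pos], hθ.2⟩)).hasDerivWithinAt)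
    (continuous_const.div (by fun_prop)
      fun θ => (cos_sq_add_mul_sin_sq_pos ha.ne' θ).ne').continuousOn
    (hg.mono <| by
      rintro _ ⟨θ, hθ, rfl⟩
      rw [uIcc_of_le hpi] at hθ
      exact scaledAngle_mem_Icc ha.le ⟨hθ.1, hθ.2.trans (by linarith [pi_pos])⟩)
  rwa [scaledAngle_zero, scaledAngle_pi_div_two ha] at h

/-- `ℱ[𝓑[f]](x) = √(1+x²)·𝓑[ℱ[f]](x)` for `x > 0`. -/
theorem stmt_14 (f : ℝ → ℝ) (hf : ContinuousOn f (Set.Ico 0 1))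
    (x : ℝ) (hx : 0 < x) :
    ∫ θ in (0:ℝ)..(Real.pi/2),
        (1 / (1 + (x * Real.sin θ) ^ 2)) *
          f ((x * Real.sin θ) / Real.sqrt (1 + (x * Real.sin θ) ^ 2))
      = Real.sqrt (1 + x ^ 2) *
          ((1 / (1 + x ^ 2)) *
            ∫ θ in (0:ℝ)..(Real.pi/2),
              f ((x / Real.sqrt (1 + x ^ 2)) * Real.sin θ)) := by
  set p := √(1 + x ^ 2)
  have hp0 : 0 < p := sqrt_pos.mpr (by positivity)
  have hp2 : p ^ 2 = 1 + x ^ 2 := sq_sqrt (by positivity)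
  have hxp : x / p < 1 := (div_lt_one hp0).mpr ((lt_sqrt hx.le).mpr (by linarith))
  have hg : ContinuousOn (fun y => f (x / p * sin y)) (Icc 0 (π / 2)) :=
    hf.comp (by fun_prop) fun y hy =>
      ⟨mul_nonneg (by positivity)
          (sin_nonneg_of_nonneg_of_le_pi hy.1 (by linarith [hy.2, pi_pos])),
        (mul_le_of_le_one_right (by positivity) (sin_le_one y)).trans_lt hxp⟩
  have hpt : ∀ θ, 1 / (1 + (x * sin θ) ^ 2) * f (x * sin θ / √(1 + (x * sin θ) ^ 2)) =
      p⁻¹ * (f (x / p * sin (scaledAngle p θ)) * (p / (cos θ ^ 2 + (p * sin θ) ^ 2))) := by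
    intro θ
    have hr : cos θ ^ 2 + (p * sin θ) ^ 2 = 1 + (x * sin θ) ^ 2 := by
      rw [mul_pow, hp2]
      linear_combination sin_sq_add_cos_sq θ
    have harg : x / p * (p * sin θ / √(1 + (x * sin θ) ^ 2)) =
        x * sin θ / √(1 + (x * sin θ) ^ 2) := by
      field_simp
    rw [sin_scaledAngle, hr, harg]
    field_simp
  calc _ = p⁻¹ * ∫ θ in (0 : ℝ)..π / 2,
        f (x / p * sin (scaledAngle p θ)) * (p / (cos θ ^ 2 + (p * sin θ) ^ 2)) := by
        simp_rw [hpt]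
        exact intervalIntegral.integral_const_mul _ _
    _ = _ := by
        rw [integral_comp_scaledAngle hp0 hg, ← hp2]
        field_simp
end

section
/- For each F ∈ (9/8, 5/4) and each z ∈ (0,1), the value ₂F₁(−3/2, 5/2; 7/2 − 4F; z) / Γ(7/2 − 4F) is strictly positive. More precisely, for fixed F in this range the function z ↦ ₂F₁(−3/2,5/2;7/2−4F;z)/Γ(7/2−4F) is strictly increasing on (0,1) with positive value 1/Γ(7/2−4F) at z = 0. -/
open Real

/-- The regularized Gauss hypergeometric function `₂F₁(a,b;c;z)/Γ(c)`, defined by its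
power series with `(a)_k (b)_k/(Γ(c+k) k!)` coefficients (entire in `c`). -/
noncomputable def reg2F1 (a b c z : ℝ) : ℝ :=
  ∑' k : ℕ,
    ((∏ i ∈ Finset.range k, (a + (i : ℝ))) * (∏ i ∈ Finset.range k, (b + (i : ℝ)))
      / Real.Gamma (c + (k : ℝ))) * z ^ k / (Nat.factorial k)

namespace Stmt16Aux

/-- The k-th term of the series for `a = -3/2`, `b = 5/2`. -/
noncomputable def hterm (c z : ℝ) (k : ℕ) : ℝ :=
  ((∏ i ∈ Finset.range k, ((-3/2 : ℝ) + (i : ℝ))) * (∏ i ∈ Finset.range k, ((5/2 : ℝ) + (i : ℝ)))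
    / Real.Gamma (c + (k : ℝ))) * z ^ k / (Nat.factorial k)

lemma reg_eq (c z : ℝ) : reg2F1 (-3/2) (5/2) c z = ∑' k : ℕ, hterm c z k := rfl

lemma GcPos {c : ℝ} (h1 : -3/2 < c) (h2 : c < -1) : 0 < Real.Gamma c := by
  have hc0 : c ≠ 0 := by linarith
  have hc1 : c + 1 ≠ 0 := by linarith
  have e1 : Real.Gamma (c + 1) = c * Real.Gamma c := Real.Gamma_add_one hc0
  have e2 : Real.Gamma (c + 1 + 1) = (c + 1) * Real.Gamma (c + 1) := Real.Gamma_add_one hc1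
  have h2pos : 0 < Real.Gamma (c + 1 + 1) := Real.Gamma_pos_of_pos (by linarith)
  have hcc : 0 < c * (c + 1) := by nlinarith
  have e3 : Real.Gamma c = Real.Gamma (c + 1 + 1) / (c * (c + 1)) := by
    rw [e2, e1]; field_simp
  rw [e3]; exact div_pos h2pos hcc
lemma Gc1Neg {c : ℝ} (h1 : -3/2 < c) (h2 : c < -1) : Real.Gamma (c + 1) < 0 := by
  have hc0 : c ≠ 0 := by linarith
  have e1 : Real.Gamma (c + 1) = c * Real.Gamma c := Real.Gamma_add_one hc0
  have := GcPos h1 h2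
  nlinarith

lemma prodB_pos (k : ℕ) : 0 < ∏ i ∈ Finset.range k, ((5/2 : ℝ) + (i : ℝ)) := by
  apply Finset.prod_pos
  intro i _
  positivity

lemma prodA_pos (k : ℕ) : 0 < ∏ i ∈ Finset.range (k + 2), ((-3/2 : ℝ) + (i : ℝ)) := by
  induction k with
  | zero => norm_num [Finset.prod_range_succ]
  | succ n ih =>
    rw [Finset.prod_range_succ]
    have hpos : (0:ℝ) < -3/2 + ((n + 2 : ℕ) : ℝ) := by push_cast; linarith
    exact mul_pos ih hpos

lemma coef_pos {c : ℝ} (h1 : -3/2 < c) (h2 : c < -1) (k : ℕ) :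
    0 < (∏ i ∈ Finset.range k, ((-3/2 : ℝ) + (i : ℝ)))
        * (∏ i ∈ Finset.range k, ((5/2 : ℝ) + (i : ℝ))) / Real.Gamma (c + (k : ℝ)) := by
  match k with
  | 0 =>
    have := GcPos h1 h2
    simp only [Finset.range_zero, Finset.prod_empty, Nat.cast_zero, add_zero, one_mul]
    positivity
  | 1 =>
    have hneg : Real.Gamma (c + (1 : ℕ)) < 0 := by
      simpa using Gc1Neg h1 h2
    apply div_pos_of_neg_of_neg _ hneg
    norm_num [Finset.prod_range_succ]
  | (k + 2) =>
    have hck : (0:ℝ) < c + ((k + 2 : ℕ) : ℝ) := by push_cast; linarith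
    exact div_pos (mul_pos (prodA_pos k) (prodB_pos (k + 2))) (Real.Gamma_pos_of_pos hck)

lemma term_pos {c : ℝ} (h1 : -3/2 < c) (h2 : c < -1) {z : ℝ} (hz : 0 < z) (k : ℕ) :
    0 < hterm c z k := by
  have h := coef_pos h1 h2 k
  unfold hterm
  have hf : (0:ℝ) < (Nat.factorial k : ℝ) := by exact_mod_cast Nat.factorial_pos k
  have hp : (0:ℝ) < z ^ k := pow_pos hz k
  positivity

lemma term_succ {c z : ℝ} (k : ℕ) (hck : c + (k : ℝ) ≠ 0)
    (hG : Real.Gamma (c + (k : ℝ)) ≠ 0) :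
    hterm c z (k + 1)
      = hterm c z k * (((-3/2 : ℝ) + k) * ((5/2 : ℝ) + k) * z / ((c + k) * (k + 1))) := by
  unfold hterm
  have hGam : Real.Gamma (c + ((k : ℕ) + 1 : ℕ)) = (c + k) * Real.Gamma (c + k) := by
    push_cast
    rw [show c + ((k : ℝ) + 1) = (c + (k : ℝ)) + 1 from by ring]
    exact Real.Gamma_add_one hck
  rw [Finset.prod_range_succ, Finset.prod_range_succ, hGam, pow_succ, Nat.factorial_succ]
  have hf : ((Nat.factorial k : ℕ) : ℝ) ≠ 0 := by
    exact_mod_cast (Nat.factorial_pos k).ne'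
  have hk1 : ((k:ℝ) + 1) ≠ 0 := by positivity
  push_cast
  field_simp

lemma summable_hterm {c : ℝ} (h1 : -3/2 < c) (h2 : c < -1) {z : ℝ}
    (hz0 : 0 ≤ z) (hz1 : z < 1) : Summable (hterm c z) := by
  apply summable_of_ratio_norm_eventually_le (r := (1 + z) / 2) (by linarith)
  rw [Filter.eventually_atTop]
  refine ⟨⌈(3:ℝ) / (1 - z)⌉₊ + 2, fun k hk => ?_⟩
  have hk2 : 2 ≤ k := le_trans (Nat.le_add_left 2 _) hk
  have hK2 : (2:ℝ) ≤ (k : ℝ) := by exact_mod_cast hk2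
  have hkz : (3:ℝ) / (1 - z) ≤ (k : ℝ) := by
    have h' : (⌈(3:ℝ) / (1 - z)⌉₊ : ℝ) ≤ (k : ℝ) := by
      exact_mod_cast le_trans (Nat.le_add_right _ 2) hk
    exact le_trans (Nat.le_ceil _) h'
  have hck : (0:ℝ) < c + (k : ℝ) := by linarith
  have hG : 0 < Real.Gamma (c + (k : ℝ)) := Real.Gamma_pos_of_pos hck
  rw [term_succ k hck.ne' hG.ne', norm_mul]
  rw [mul_comm ((1 + z) / 2) _]
  apply mul_le_mul_of_nonneg_left _ (norm_nonneg _)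
  have hden : (0:ℝ) < (c + (k:ℝ)) * ((k:ℝ) + 1) := by positivity
  have hq0 : (0:ℝ) ≤ ((-3/2 : ℝ) + k) * ((5/2 : ℝ) + k) * z / ((c + k) * (k + 1)) := by
    have : (0:ℝ) ≤ ((-3/2 : ℝ) + k) := by linarith
    positivity
  rw [Real.norm_eq_abs, abs_of_nonneg hq0, div_le_iff₀ hden]
  have hk3 : 3 ≤ (k:ℝ) * (1 - z) := by
    rw [div_le_iff₀ (by linarith : (0:ℝ) < 1 - z)] at hkz
    linarith
  have hK0 : (0:ℝ) ≤ (k:ℝ) := by linarith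
  nlinarith [mul_nonneg hz0 hK0, mul_nonneg (mul_nonneg hz0 hz0) hK0,
    mul_pos (show (0:ℝ) < (-3/2 : ℝ) + k + 0 by linarith) (show (0:ℝ) < 1 - z by linarith),
    mul_nonneg (show (0:ℝ) ≤ c + 3/2 by linarith)
      (mul_nonneg (show (0:ℝ) ≤ (k:ℝ) + 1 by linarith) (show (0:ℝ) ≤ 1 + z by linarith)),
    mul_nonneg (show (0:ℝ) ≤ (k:ℝ) - 3/2 by linarith)
      (show (0:ℝ) ≤ (k:ℝ)*(1-z) - 3 + (1 - z) + (1 - z) by nlinarith)]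

end Stmt16Aux

open Stmt16Aux in
/-- For `F ∈ (9/8, 5/4)`, the function `z ↦ ₂F₁(−3/2,5/2;7/2−4F;z)/Γ(7/2−4F)` is strictly
positive on `(0,1)`, strictly increasing on `(0,1)`, and equals `1/Γ(7/2−4F) > 0` at `z=0`. -/
theorem stmt_16 (F : ℝ) (hF : F ∈ Set.Ioo (9/8 : ℝ) (5/4)) :
    (∀ z ∈ Set.Ioo (0:ℝ) 1, 0 < reg2F1 (-3/2) (5/2) (7/2 - 4*F) z)
      ∧ StrictMonoOn (reg2F1 (-3/2) (5/2) (7/2 - 4*F)) (Set.Ioo 0 1)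
      ∧ reg2F1 (-3/2) (5/2) (7/2 - 4*F) 0 = 1 / Real.Gamma (7/2 - 4*F)
      ∧ 0 < 1 / Real.Gamma (7/2 - 4*F) := by
  obtain ⟨hF1, hF2⟩ := hF
  set c : ℝ := 7/2 - 4*F with hc
  have h1 : -3/2 < c := by rw [hc]; linarith
  have h2 : c < -1 := by rw [hc]; linarith
  have hGc : 0 < Real.Gamma c := GcPos h1 h2
  refine ⟨?_, ?_, ?_, one_div_pos.mpr hGc⟩
  · intro z hz
    rw [reg_eq]
    exact Summable.tsum_pos (summable_hterm h1 h2 hz.1.le hz.2)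
      (fun k => (term_pos h1 h2 hz.1 k).le) 0 (term_pos h1 h2 hz.1 0)
  · intro z1 hz1 z2 hz2 h12
    rw [reg_eq, reg_eq]
    have hle : ∀ k, hterm c z1 k ≤ hterm c z2 k := by
      intro k
      unfold hterm
      have hcoef := (coef_pos h1 h2 k).le
      have hpow : z1 ^ k ≤ z2 ^ k := pow_le_pow_left₀ hz1.1.le h12.le k
      have hf : (0:ℝ) < (Nat.factorial k : ℝ) := by exact_mod_cast Nat.factorial_pos k
      exact (div_le_div_iff_of_pos_right hf).mpr (mul_le_mul_of_nonneg_left hpow hcoef)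
    have hlt : hterm c z1 1 < hterm c z2 1 := by
      unfold hterm
      have hcoef := coef_pos h1 h2 1
      have hpow : z1 ^ 1 < z2 ^ 1 := by simpa using h12
      have hf : (0:ℝ) < (Nat.factorial 1 : ℝ) := by norm_num
      exact (div_lt_div_iff_of_pos_right hf).mpr (mul_lt_mul_of_pos_left hpow hcoef)
    exact Summable.tsum_lt_tsum hle hlt (summable_hterm h1 h2 hz1.1.le (lt_trans h12 hz2.2))
      (summable_hterm h1 h2 (lt_trans hz1.1 h12).le hz2.2)
  · rw [reg_eq]
    rw [tsum_eq_single 0 (by intro k hk; simp [hterm, zero_pow hk])]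
    simp [hterm]
end

section
/- For F ∈ (1, 5/4) and 0 < a < 1, ∫_0^1 (−1 + (1−y)^(4−4F) + (4−4F)y) y^(−5/2) dy = −22/3 + 8F + (4√π Γ(5−4F))/(3 Γ(7/2−4F)), where the improper integral converges at y = 0 (the integrand is O(y^(−1/2))) and at y = 1 (since 4−4F > −1). -/
/-!
With `s = 4 - 4F ∈ (-1, 0)` the integrand is `y ^ (-5/2)` times the first-order Taylor remainder
of `(1 - y) ^ s` at `0`. Integrating by parts twice (against the Taylor remainders of
`(1 - y) ^ (s + 1)`) gives an explicit antiderivative of the integrand plus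
`(1 - 4s²)/3 · y ^ (-1/2) (1 - y) ^ s`. Since the remainders are `O(y²)` and `O(y³)`, the
antiderivative vanishes at `0+`; it equals `2/3 - 2s` at `1`; and the leftover Beta integral is
`Γ(1/2) Γ(s + 1) / Γ(s + 3/2)`. Finally the identity `1/Γ(s - 1/2) = (s² - 1/4)/Γ(s + 3/2)`,
valid even at the pole `s = -1/2`, absorbs the factor `1 - 4s²`.
-/

open MeasureTheory Real Set Filter Topology

lemma ofReal_rpow_mul_one_sub_rpow {a b y : ℝ} (hy : y ∈ Icc (0:ℝ) 1) :
    ((y ^ (a - 1) * (1 - y) ^ (b - 1) : ℝ) : ℂ)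
      = (y : ℂ) ^ ((a : ℂ) - 1) * (1 - (y : ℂ)) ^ ((b : ℂ) - 1) := by
  push_cast [Complex.ofReal_cpow hy.1, Complex.ofReal_cpow (sub_nonneg.2 hy.2)]
  rfl

lemma intervalIntegrable_rpow_mul_one_sub_rpow {a b : ℝ} (ha : 0 < a) (hb : 0 < b) :
    IntervalIntegrable (fun y => y ^ (a - 1) * (1 - y) ^ (b - 1)) volume 0 1 := by
  refine (Complex.betaIntegral_convergent (u := a) (v := b) (by simpa) (by simpa)).norm.congr_uIoo
    fun y hy => ?_
  rw [uIoo_of_le zero_le_one] at hy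
  dsimp only
  rw [← ofReal_rpow_mul_one_sub_rpow (Ioo_subset_Icc_self hy), Complex.norm_real, Real.norm_eq_abs,
    abs_of_nonneg (by have := hy.2; have := hy.1; positivity)]

lemma integral_rpow_mul_one_sub_rpow_s17 {a b : ℝ} (ha : 0 < a) (hb : 0 < b) :
    ∫ y in (0:ℝ)..1, y ^ (a - 1) * (1 - y) ^ (b - 1) = Gamma a * Gamma b / Gamma (a + b) := by
  have h := Complex.betaIntegral_eq_Gamma_mul_div a b (by simpa) (by simpa)
  rw [Complex.betaIntegral, ← Complex.ofReal_add, Complex.Gamma_ofReal, Complex.Gamma_ofReal,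
    Complex.Gamma_ofReal, ← intervalIntegral.integral_congr fun y hy =>
      ofReal_rpow_mul_one_sub_rpow (a := a) (b := b) (by rwa [uIcc_of_le zero_le_one] at hy),
    intervalIntegral.integral_ofReal] at h
  exact_mod_cast h

-- Unlike `Gamma_add_one`, this also holds at `x = 0`, where `Gamma 0 = 0`.
lemma inv_Gamma_eq_mul_inv_Gamma_add_one (x : ℝ) : (Gamma x)⁻¹ = x * (Gamma (x + 1))⁻¹ := by
  rcases ne_or_eq x 0 with hx | rfl
  · rw [Gamma_add_one hx, mul_inv, mul_inv_cancel_left₀ hx]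
  · rw [zero_add, Gamma_zero, inv_zero, zero_mul]

lemma abs_le_mul_pow_succ_of_hasDerivAt {f f' : ℝ → ℝ} {b C : ℝ} {n : ℕ}
    (hf : ∀ x ∈ Icc 0 b, HasDerivAt f (f' x) x) (hf₀ : f 0 = 0) (hC : 0 ≤ C)
    (hf' : ∀ x ∈ Icc 0 b, |f' x| ≤ C * x ^ n) {y : ℝ} (hy : y ∈ Icc 0 b) :
    |f y| ≤ C * y ^ (n + 1) := by
  have hsub : Icc 0 y ⊆ Icc 0 b := Icc_subset_Icc_right hy.2
  have key := norm_image_sub_le_of_norm_deriv_le_segment' (f := f) (f' := f') (C := C * y ^ n)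
    (fun x hx => (hf x (hsub hx)).hasDerivWithinAt)
    (fun x hx => (hf' x (hsub (Ico_subset_Icc_self hx))).trans
      (by gcongr; exacts [hx.1, hx.2.le])) y (right_mem_Icc.2 hy.1)
  simpa [hf₀, pow_succ, mul_assoc] using key

lemma tendsto_rpow_nhdsGT_zero {a : ℝ} (ha : 0 < a) :
    Tendsto (fun y : ℝ => y ^ a) (𝓝[>] 0) (𝓝 0) := by
  simpa [zero_rpow ha.ne'] using
    (continuousAt_rpow_const 0 a (Or.inr ha.le)).tendsto.mono_left nhdsWithin_le_nhds

lemma tendsto_rpow_mul_nhdsGT_zero_of_abs_le {f : ℝ → ℝ} {a b C : ℝ} {n : ℕ} (hb : 0 < b)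
    (hf : ∀ y ∈ Icc 0 b, |f y| ≤ C * y ^ n) (ha : 0 < a + n) :
    Tendsto (fun y => y ^ a * f y) (𝓝[>] 0) (𝓝 0) := by
  refine squeeze_zero_norm' ?_ (by simpa using (tendsto_rpow_nhdsGT_zero ha).const_mul C)
  filter_upwards [Ioc_mem_nhdsGT hb] with y hy
  rw [Real.norm_eq_abs, abs_mul, abs_of_pos (rpow_pos_of_pos hy.1 a), rpow_add hy.1, rpow_natCast]
  calc y ^ a * |f y| ≤ y ^ a * (C * y ^ n) :=
        mul_le_mul_of_nonneg_left (hf y (Ioc_subset_Icc_self hy)) (rpow_nonneg hy.1.le a)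
    _ = C * (y ^ a * y ^ n) := by ring

noncomputable def binomRem₁ (p y : ℝ) : ℝ := (1 - y) ^ p - 1 + p * y

noncomputable def binomRem₂ (p y : ℝ) : ℝ := binomRem₁ p y - p * (p - 1) / 2 * y ^ 2

lemma hasDerivAt_one_sub_rpow (p : ℝ) {y : ℝ} (hy : y < 1) :
    HasDerivAt (fun x => (1 - x) ^ p) (-(p * (1 - y) ^ (p - 1))) y := by
  simpa using ((hasDerivAt_id y).const_sub 1).rpow_const (p := p) (Or.inl (sub_ne_zero.2 hy.ne'))

lemma hasDerivAt_binomRem₁ (p : ℝ) {y : ℝ} (hy : y < 1) :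
    HasDerivAt (binomRem₁ p) (-p * ((1 - y) ^ (p - 1) - 1)) y := by
  refine (((hasDerivAt_one_sub_rpow p hy).sub_const 1).add
    ((hasDerivAt_id y).const_mul p)).congr_deriv ?_
  ring

lemma hasDerivAt_binomRem₂ (p : ℝ) {y : ℝ} (hy : y < 1) :
    HasDerivAt (binomRem₂ p) (-p * binomRem₁ (p - 1) y) y := by
  refine ((hasDerivAt_binomRem₁ p hy).sub
    ((hasDerivAt_pow 2 y).const_mul (p * (p - 1) / 2))).congr_deriv ?_
  simp only [binomRem₁]
  push_cast
  ring

lemma exists_abs_one_sub_rpow_sub_one_le (q : ℝ) :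
    ∃ C, 0 ≤ C ∧ ∀ y ∈ Icc (0:ℝ) (1/2), |(1 - y) ^ q - 1| ≤ C * y ^ 1 := by
  obtain ⟨M, hM⟩ := (isCompact_Icc (a := (0:ℝ)) (b := 1/2)).exists_bound_of_continuousOn
    (f := fun x : ℝ => (1 - x) ^ (q - 1)) fun x hx =>
      (ContinuousAt.rpow_const (f := fun x : ℝ => 1 - x) (by fun_prop)
        (Or.inl (sub_ne_zero.2 (by linarith [hx.2])))).continuousWithinAt
  have hM₀ : 0 ≤ M := (norm_nonneg _).trans (hM 0 (by norm_num))
  refine ⟨|q| * M, by positivity, fun y hy => ?_⟩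
  refine abs_le_mul_pow_succ_of_hasDerivAt (n := 0)
    (fun x hx => (hasDerivAt_one_sub_rpow q (by linarith [hx.2])).sub_const 1)
    (by simp) (by positivity) (fun x hx => ?_) hy
  rw [pow_zero, mul_one, abs_neg, abs_mul]
  exact mul_le_mul_of_nonneg_left (hM x hx) (abs_nonneg q)

lemma exists_abs_binomRem₁_le (p : ℝ) :
    ∃ C, 0 ≤ C ∧ ∀ y ∈ Icc (0:ℝ) (1/2), |binomRem₁ p y| ≤ C * y ^ 2 := by
  obtain ⟨C, hC, hbound⟩ := exists_abs_one_sub_rpow_sub_one_le (p - 1)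
  refine ⟨|p| * C, by positivity, fun y hy => ?_⟩
  refine abs_le_mul_pow_succ_of_hasDerivAt (n := 1)
    (fun x hx => hasDerivAt_binomRem₁ p (by linarith [hx.2])) (by simp [binomRem₁])
    (by positivity) (fun x hx => ?_) hy
  rw [abs_mul, abs_neg, mul_assoc]
  exact mul_le_mul_of_nonneg_left (hbound x hx) (abs_nonneg p)

lemma exists_abs_binomRem₂_le (p : ℝ) :
    ∃ C, 0 ≤ C ∧ ∀ y ∈ Icc (0:ℝ) (1/2), |binomRem₂ p y| ≤ C * y ^ 3 := by
  obtain ⟨C, hC, hbound⟩ := exists_abs_binomRem₁_le (p - 1)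
  refine ⟨|p| * C, by positivity, fun y hy => ?_⟩
  refine abs_le_mul_pow_succ_of_hasDerivAt (n := 2)
    (fun x hx => hasDerivAt_binomRem₂ p (by linarith [hx.2])) (by simp [binomRem₂, binomRem₁])
    (by positivity) (fun x hx => ?_) hy
  rw [abs_mul, abs_neg, mul_assoc]
  exact mul_le_mul_of_nonneg_left (hbound x hx) (abs_nonneg p)

lemma intervalIntegrable_binomRem₁_mul_rpow {s : ℝ} (hs : -1 < s) :
    IntervalIntegrable (fun y => binomRem₁ s y * y ^ (-(5:ℝ)/2)) volume 0 1 := by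
  have hmeas : Measurable fun y => binomRem₁ s y * y ^ (-(5:ℝ)/2) := by
    unfold binomRem₁; fun_prop
  obtain ⟨C, -, hC⟩ := exists_abs_binomRem₁_le s
  have h₀ : IntervalIntegrable (fun y => binomRem₁ s y * y ^ (-(5:ℝ)/2)) volume 0 (1/2) := by
    refine ((intervalIntegral.intervalIntegrable_rpow' (r := -(1:ℝ)/2) (by norm_num)).const_mul
      C).mono_fun' hmeas.aestronglyMeasurable ?_
    rw [uIoc_of_le (by norm_num), EventuallyLE, ae_restrict_iff' measurableSet_Ioc]
    refine ae_of_all _ fun y hy => ?_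
    rw [Real.norm_eq_abs, abs_mul, abs_of_pos (rpow_pos_of_pos hy.1 _)]
    calc |binomRem₁ s y| * y ^ (-(5:ℝ)/2) ≤ C * y ^ 2 * y ^ (-(5:ℝ)/2) :=
          mul_le_mul_of_nonneg_right (hC y (Ioc_subset_Icc_self hy)) (rpow_nonneg hy.1.le _)
      _ = C * y ^ (-(1:ℝ)/2) := by
          rw [mul_assoc, ← rpow_natCast, ← rpow_add hy.1]; norm_num
  have h₁ : IntervalIntegrable (fun y => binomRem₁ s y * y ^ (-(5:ℝ)/2)) volume (1/2) 1 := by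
    have hpow : IntervalIntegrable (fun y : ℝ => (1 - y) ^ s) volume (1/2) 1 := by
      have h := ((intervalIntegral.intervalIntegrable_rpow' hs).comp_sub_left 1
        (a := 0) (b := 1/2)).symm
      norm_num at h
      exact h
    refine ((hpow.sub intervalIntegrable_const).add
      ((continuous_const_mul s).intervalIntegrable _ _)).mul_continuousOn ?_
    exact continuousOn_id.rpow_const fun y hy => Or.inl (by
      rw [uIcc_of_le (by norm_num)] at hy; exact (by linarith [hy.1] : (0:ℝ) < y).ne')
  exact h₀.trans h₁

noncomputable def antideriv (s y : ℝ) : ℝ :=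
  -(2/3) * (y ^ (-(3:ℝ)/2) * binomRem₂ (s + 1) y)
    - 2 * (1 - 2 * s) / 3 * (y ^ (-(1:ℝ)/2) * binomRem₁ (s + 1) y)
    - (s + 1) * (5 * s - 2) / 3 * y ^ ((1:ℝ)/2)

lemma hasDerivAt_antideriv (s : ℝ) {y : ℝ} (hy : y ∈ Ioo (0:ℝ) 1) :
    HasDerivAt (antideriv s)
      (binomRem₁ s y * y ^ (-(5:ℝ)/2)
        + (1 - 4 * s ^ 2) / 3 * (y ^ ((1:ℝ)/2 - 1) * (1 - y) ^ (s + 1 - 1))) y := by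
  obtain ⟨hy₀, hy₁⟩ := hy
  have hpow (a : ℝ) : HasDerivAt (fun x : ℝ => x ^ a) (a * y ^ (a - 1)) y :=
    hasDerivAt_rpow_const (Or.inl hy₀.ne')
  refine ((((hpow _).mul (hasDerivAt_binomRem₂ (s + 1) hy₁)).const_mul _).sub
    (((hpow _).mul (hasDerivAt_binomRem₁ (s + 1) hy₁)).const_mul _) |>.sub
    ((hpow _).const_mul _)).congr_deriv ?_
  have hrpow (e : ℝ) (k : ℕ) (he : e = -(5:ℝ)/2 + k) : y ^ e = y ^ (-(5:ℝ)/2) * y ^ k := by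
    rw [he, rpow_add hy₀, rpow_natCast]
  rw [hrpow (-(3:ℝ)/2) 1 (by norm_num), hrpow (-(3:ℝ)/2 - 1) 0 (by norm_num),
    hrpow (-(1:ℝ)/2) 2 (by norm_num), hrpow (-(1:ℝ)/2 - 1) 1 (by norm_num),
    hrpow ((1:ℝ)/2 - 1) 2 (by norm_num), add_sub_cancel_right]
  simp only [binomRem₂, binomRem₁]
  rw [rpow_add (sub_pos.2 hy₁), rpow_one]
  ring

lemma tendsto_antideriv_nhdsGT_zero (s : ℝ) : Tendsto (antideriv s) (𝓝[>] 0) (𝓝 0) := by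
  obtain ⟨C₂, -, hC₂⟩ := exists_abs_binomRem₂_le (s + 1)
  obtain ⟨C₁, -, hC₁⟩ := exists_abs_binomRem₁_le (s + 1)
  have h₂ := tendsto_rpow_mul_nhdsGT_zero_of_abs_le (a := -(3:ℝ)/2) (by norm_num) hC₂
    (by norm_num)
  have h₁ := tendsto_rpow_mul_nhdsGT_zero_of_abs_le (a := -(1:ℝ)/2) (by norm_num) hC₁
    (by norm_num)
  have h := ((h₂.const_mul (-(2/3))).sub (h₁.const_mul (2 * (1 - 2 * s) / 3))).sub
    ((tendsto_rpow_nhdsGT_zero (a := 1/2) (by norm_num)).const_mul ((s + 1) * (5 * s - 2) / 3))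
  simp only [mul_zero, sub_zero] at h
  exact h

lemma continuousAt_antideriv_one {s : ℝ} (hs : -1 < s) : ContinuousAt (antideriv s) 1 := by
  unfold antideriv binomRem₂ binomRem₁
  fun_prop (disch := (norm_num; try linarith))

lemma antideriv_one {s : ℝ} (hs : -1 < s) : antideriv s 1 = 2/3 - 2 * s := by
  simp only [antideriv, binomRem₂, binomRem₁, one_rpow, sub_self,
    zero_rpow (by linarith : s + 1 ≠ 0)]
  ring

theorem integral_binomRem₁_mul_rpow_neg_five_halves {s : ℝ} (hs : -1 < s) :
    ∫ y in Ioo (0:ℝ) 1, binomRem₁ s y * y ^ (-(5:ℝ)/2)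
      = 2/3 - 2 * s + 4 * √π * Gamma (s + 1) / (3 * Gamma (s - 1/2)) := by
  have hβ := intervalIntegrable_rpow_mul_one_sub_rpow (a := 1/2) (b := s + 1) (by norm_num)
    (by linarith)
  have hf := intervalIntegrable_binomRem₁_mul_rpow hs
  have hFTC := intervalIntegral.integral_eq_sub_of_hasDerivAt_of_tendsto zero_lt_one
    (fun y hy => hasDerivAt_antideriv s hy) (hf.add (hβ.const_mul _))
    (tendsto_antideriv_nhdsGT_zero s)
    ((continuousAt_antideriv_one hs).tendsto.mono_left nhdsWithin_le_nhds)
  rw [intervalIntegral.integral_add hf (hβ.const_mul _), intervalIntegral.integral_const_mul,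
    integral_rpow_mul_one_sub_rpow_s17 (by norm_num) (by linarith), antideriv_one hs, sub_zero,
    Gamma_one_half_eq, intervalIntegral.integral_of_le zero_le_one,
    integral_Ioc_eq_integral_Ioo] at hFTC
  have hΓ : (Gamma (s - 1/2))⁻¹ = (s - 1/2) * (s + 1/2) * (Gamma (1/2 + (s + 1)))⁻¹ := by
    rw [inv_Gamma_eq_mul_inv_Gamma_add_one, inv_Gamma_eq_mul_inv_Gamma_add_one,
      show s - 1/2 + 1 + 1 = 1/2 + (s + 1) by ring]
    ring
  linear_combination hFTC - 4/3 * √π * Gamma (s + 1) * hΓ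

/-- For `F ∈ (1, 5/4)`,
`∫_0^1 (−1 + (1−y)^{4−4F} + (4−4F)y) y^{−5/2} dy = −22/3 + 8F + 4√π Γ(5−4F)/(3Γ(7/2−4F))`. -/
theorem stmt_17 (F : ℝ) (hF : F ∈ Set.Ioo (1 : ℝ) (5/4)) :
    ∫ y in Set.Ioo (0:ℝ) 1,
        (-1 + (1 - y) ^ (4 - 4*F) + (4 - 4*F) * y) * y ^ (-(5:ℝ)/2)
      = -22/3 + 8*F +
          (4 * Real.sqrt Real.pi * Real.Gamma (5 - 4*F)) / (3 * Real.Gamma (7/2 - 4*F)) := by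
  have h := integral_binomRem₁_mul_rpow_neg_five_halves (s := 4 - 4*F) (by linarith [hF.2])
  rw [show (4:ℝ) - 4*F + 1 = 5 - 4*F by ring, show (4:ℝ) - 4*F - 1/2 = 7/2 - 4*F by ring] at h
  have hintegrand : (fun y : ℝ => (-1 + (1 - y) ^ (4 - 4*F) + (4 - 4*F) * y) * y ^ (-(5:ℝ)/2))
      = fun y => binomRem₁ (4 - 4*F) y * y ^ (-(5:ℝ)/2) := by
    funext y
    rw [binomRem₁]
    ring
  rw [hintegrand, h]
  ring
end
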